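/- arXiv:2210.08320 — 4 statements merged into one kernel-verified Lean document; each statement's English description precedes it below -/
import Mathlib

section
/- Let n ≥ 3, let a, b ∈ ℝⁿ, let r, s ∈ [1/2, 2], and let 0 < δ < 1/2. Set d = |a−b| + |r−s|. Then the Lebesgue measure of the intersection of the δ-neighborhoods of the spheres S(a,r) and S(b,s) satisfies |S^δ(a,r) ∩ S^δ(b,s)| ≤ C(n) · δ² / (d + δ). -/
open MeasureTheory Metric Set Module WithLp
open scoped ENNReal NNReal

/-!
If `|r - s| > |a - b| + 2δ` the two shells are disjoint; otherwise `d + δ ≤ 5 max(|a - b|, δ)`.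
When `|a - b| ≤ δ` the intersection is bounded by one shell, of measure `O(δ)`. When
`|a - b| > δ`, in orthonormal coordinates `(t, y) ∈ ℝ × ℝⁿ⁻¹` centred at `a` with `b - a` along
the `t`-axis, the two shells force `t` into an interval of length `2(r + s)δ / |a - b|`, and each
slice `{y | t² + |y|² ∈ [(r - δ)², (r + δ)²]}` is a shell in `ℝⁿ⁻¹` whose squared radii differ by
`4rδ`. Since `n - 1 ≥ 2`, `ρ ↦ ρⁿ⁻¹` is Lipschitz as a function of `ρ²` on bounded sets, so each
slice has measure `O(δ)` uniformly in `t`, and Fubini gives `O(δ² / |a - b|)`.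
-/

noncomputable section

lemma pow_sub_pow_le_mul_sq_sub_sq {m : ℕ} (hm : 2 ≤ m) {a b R : ℝ} (hb : 0 ≤ b) (hba : b ≤ a)
    (haR : a ≤ R) : a ^ m - b ^ m ≤ m * R ^ (m - 2) * (a ^ 2 - b ^ 2) := by
  obtain ⟨k, rfl⟩ : ∃ k, m = k + 2 := ⟨m - 2, by omega⟩
  have ha : 0 ≤ a := hb.trans hba
  have hR : 0 ≤ R := ha.trans haR
  have hmax : max |a| |b| = a := by rw [abs_of_nonneg ha, abs_of_nonneg hb, max_eq_left hba]
  calc a ^ (k + 2) - b ^ (k + 2) ≤ |a ^ (k + 2) - b ^ (k + 2)| := le_abs_self _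
    _ ≤ |a - b| * (k + 2 : ℕ) * max |a| |b| ^ (k + 2 - 1) := abs_pow_sub_pow_le ..
    _ = (k + 2 : ℕ) * a ^ k * (a * (a - b)) := by
      rw [hmax, abs_of_nonneg (sub_nonneg.2 hba), Nat.add_sub_assoc one_le_two]; ring
    _ ≤ (k + 2 : ℕ) * R ^ k * (a ^ 2 - b ^ 2) := by gcongr; nlinarith
    _ = _ := by simp

def thickSphere {X : Type*} [PseudoMetricSpace X] (a : X) (r δ : ℝ) : Set X :=
  {x | r - δ ≤ dist x a ∧ dist x a ≤ r + δ}

lemma thickSphere_inter_thickSphere_eq_empty {X : Type*} [PseudoMetricSpace X] {a b : X} {r s δ : ℝ}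
    (h : dist a b + 2 * δ < |r - s|) : thickSphere a r δ ∩ thickSphere b s δ = ∅ := by
  refine eq_empty_of_forall_notMem fun x ⟨⟨ha₁, ha₂⟩, hb₁, hb₂⟩ ↦ h.not_ge ?_
  have hx := abs_le.1 (abs_dist_sub_le a b x)
  rw [dist_comm a x, dist_comm b x] at hx
  exact abs_le.2 ⟨by linarith [hx.1], by linarith [hx.2]⟩

lemma ofReal_mul_le_ofReal {x y : ℝ} {ν : ℝ≥0∞} (hν : ν ≠ ∞) (hx : 0 ≤ x)
    (h : x * ν.toReal ≤ y) : ENNReal.ofReal x * ν ≤ ENNReal.ofReal y := by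
  rw [← ENNReal.ofReal_toReal hν, ← ENNReal.ofReal_mul hx]
  exact ENNReal.ofReal_le_ofReal h

section AddHaar

variable {E : Type*} [NormedAddCommGroup E] [NormedSpace ℝ E] [MeasurableSpace E] [BorelSpace E]
  [FiniteDimensional ℝ E] (μ : Measure E) [μ.IsAddHaarMeasure]

lemma addHaar_annulus_le [Nontrivial E] (a : E) {ρ₁ ρ₂ : ℝ} (hρ₁ : 0 ≤ ρ₁) (hρ : ρ₁ ≤ ρ₂) :
    μ {x | ρ₁ ≤ dist x a ∧ dist x a ≤ ρ₂} ≤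
      ENNReal.ofReal (ρ₂ ^ finrank ℝ E - ρ₁ ^ finrank ℝ E) * μ (ball 0 1) := by
  have hsub : {x | ρ₁ ≤ dist x a ∧ dist x a ≤ ρ₂} ⊆ closedBall a ρ₂ \ ball a ρ₁ :=
    fun x hx ↦ ⟨hx.2, fun h ↦ (mem_ball.1 h).not_ge hx.1⟩
  refine (measure_mono hsub).trans_eq ?_
  rw [measure_sdiff ((ball_subset_closedBall).trans (closedBall_subset_closedBall hρ))
    measurableSet_ball.nullMeasurableSet measure_ball_lt_top.ne,
    Measure.addHaar_closedBall μ a (hρ₁.trans hρ), Measure.addHaar_ball μ a hρ₁,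
    ← ENNReal.sub_mul fun _ _ ↦ measure_ball_lt_top.ne, ← ENNReal.ofReal_sub _ (by positivity)]

lemma addHaar_norm_sq_mem_Icc_le (hE : 2 ≤ finrank ℝ E) {α β R : ℝ} (hαβ : α ≤ β) (hR : 0 ≤ R)
    (hβR : β ≤ R ^ 2) :
    μ {y : E | ‖y‖ ^ 2 ∈ Icc α β} ≤
      ENNReal.ofReal (finrank ℝ E * R ^ (finrank ℝ E - 2) * (β - α)) * μ (ball 0 1) := by
  have : Nontrivial E := Module.nontrivial_of_finrank_pos (R := ℝ) (by omega)
  have hsub : {y : E | ‖y‖ ^ 2 ∈ Icc α β} ⊆ {y | √α ≤ dist y 0 ∧ dist y 0 ≤ √β} := by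
    rintro y ⟨h₁, h₂⟩
    rw [Set.mem_ofPred_eq, dist_zero_right, ← Real.sqrt_sq (norm_nonneg y)]
    exact ⟨Real.sqrt_le_sqrt h₁, Real.sqrt_le_sqrt h₂⟩
  have hsq : √β ^ 2 - √α ^ 2 ≤ β - α := by
    rw [Real.sq_sqrt', Real.sq_sqrt']
    have : max β 0 ≤ max α 0 + (β - α) :=
      max_le (by linarith [le_max_left α 0]) (by linarith [le_max_right α 0])
    linarith
  refine (measure_mono hsub).trans <| (addHaar_annulus_le μ 0 (Real.sqrt_nonneg α)
    (Real.sqrt_le_sqrt hαβ)).trans ?_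
  gcongr
  calc √β ^ finrank ℝ E - √α ^ finrank ℝ E
      ≤ finrank ℝ E * R ^ (finrank ℝ E - 2) * (√β ^ 2 - √α ^ 2) :=
        pow_sub_pow_le_mul_sq_sub_sq hE (Real.sqrt_nonneg α) (Real.sqrt_le_sqrt hαβ)
          ((Real.sqrt_le_left hR).2 hβR)
    _ ≤ finrank ℝ E * R ^ (finrank ℝ E - 2) * (β - α) := by gcongr

lemma addHaar_thickSphere_le (hE : 2 ≤ finrank ℝ E) (a : E) {r δ R : ℝ} (hδ : 0 ≤ δ) (hδr : δ ≤ r)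
    (hR : r + δ ≤ R) :
    μ (thickSphere a r δ) ≤
      ENNReal.ofReal (finrank ℝ E * R ^ (finrank ℝ E - 2) * (4 * r * δ)) * μ (ball 0 1) := by
  have : Nontrivial E := Module.nontrivial_of_finrank_pos (R := ℝ) (by omega)
  refine (addHaar_annulus_le μ a (sub_nonneg.2 hδr) (by linarith)).trans ?_
  gcongr
  calc (r + δ) ^ finrank ℝ E - (r - δ) ^ finrank ℝ E
      ≤ finrank ℝ E * R ^ (finrank ℝ E - 2) * ((r + δ) ^ 2 - (r - δ) ^ 2) :=
        pow_sub_pow_le_mul_sq_sub_sq hE (sub_nonneg.2 hδr) (by linarith) hR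
    _ = finrank ℝ E * R ^ (finrank ℝ E - 2) * (4 * r * δ) := by ring

lemma exists_addHaar_thickSphere_le (hE : 2 ≤ finrank ℝ E) :
    ∃ K : ℝ, 0 < K ∧ ∀ (a : E) (r δ : ℝ), 0 ≤ δ → δ ≤ r → r ≤ 2 → δ ≤ 1 →
      μ (thickSphere a r δ) ≤ ENNReal.ofReal (K * δ) := by
  have : Nontrivial E := Module.nontrivial_of_finrank_pos (R := ℝ) (by omega)
  have hω : 0 < (μ (ball 0 1)).toReal :=
    ENNReal.toReal_pos (measure_ball_pos _ _ one_pos).ne' measure_ball_lt_top.ne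
  refine ⟨finrank ℝ E * 3 ^ (finrank ℝ E - 2) * 8 * (μ (ball 0 1)).toReal, by positivity,
    fun a r δ hδ hδr hr hδ₁ ↦ ?_⟩
  refine (addHaar_thickSphere_le μ hE a hδ hδr (R := 3) (by linarith)).trans
    (ofReal_mul_le_ofReal measure_ball_lt_top.ne (mul_nonneg (by positivity) (by nlinarith)) ?_)
  have : 0 ≤ finrank ℝ E * 3 ^ (finrank ℝ E - 2) * (μ (ball 0 1)).toReal * δ := by positivity
  nlinarith


lemma prod_shell_inter_slab_le (hE : 2 ≤ finrank ℝ E) {α β R l u : ℝ} (hαβ : α ≤ β) (hR : 0 ≤ R)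
    (hβR : β ≤ R ^ 2) :
    (volume.prod μ) {p : ℝ × E | p.1 ^ 2 + ‖p.2‖ ^ 2 ∈ Icc α β ∧ p.1 ∈ Icc l u}
      ≤ ENNReal.ofReal (u - l) *
        (ENNReal.ofReal (finrank ℝ E * R ^ (finrank ℝ E - 2) * (β - α)) * μ (ball 0 1)) := by
  set M := ENNReal.ofReal (finrank ℝ E * R ^ (finrank ℝ E - 2) * (β - α)) * μ (ball 0 1)
  have hslice (t : ℝ) : μ (Prod.mk t ⁻¹'
      {p : ℝ × E | p.1 ^ 2 + ‖p.2‖ ^ 2 ∈ Icc α β ∧ p.1 ∈ Icc l u}) ≤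
      (Icc l u).indicator (fun _ ↦ M) t := by
    by_cases ht : t ∈ Icc l u
    · rw [indicator_of_mem ht]
      refine (measure_mono fun y hy ↦ ?_).trans <| (addHaar_norm_sq_mem_Icc_le μ hE
        (α := α - t ^ 2) (β := β - t ^ 2) (by linarith) hR (by nlinarith)).trans_eq
        (by rw [sub_sub_sub_cancel_right])
      simp only [mem_preimage, Set.mem_ofPred_eq, mem_Icc] at hy ⊢
      constructor <;> linarith [hy.1.1, hy.1.2]
    · rw [indicator_of_notMem ht, nonpos_iff_eq_zero, measure_eq_zero_iff_ae_notMem]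
      exact ae_of_all _ fun y hy ↦ ht hy.2
  rw [Measure.prod_apply (by measurability)]
  calc ∫⁻ t, μ (Prod.mk t ⁻¹' _) ≤ ∫⁻ t, (Icc l u).indicator (fun _ ↦ M) t := lintegral_mono hslice
    _ = _ := by
      rw [lintegral_indicator measurableSet_Icc, setLIntegral_const, Real.volume_Icc, mul_comm]

end AddHaar

section InnerProductSpace

variable {E F : Type*} [NormedAddCommGroup E] [InnerProductSpace ℝ E] [FiniteDimensional ℝ E]
  [NormedAddCommGroup F] [InnerProductSpace ℝ F] [FiniteDimensional ℝ F]

lemma exists_linearIsometryEquiv_apply_eq (h : finrank ℝ E = finrank ℝ F) {v : E} {w : F}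
    (hvw : ‖v‖ = ‖w‖) : ∃ φ : E ≃ₗᵢ[ℝ] F, φ v = w := by
  let ψ : E ≃ₗᵢ[ℝ] F := ((stdOrthonormalBasis ℝ E).reindex (finCongr h)).repr.trans
    (stdOrthonormalBasis ℝ F).repr.symm
  refine ⟨ψ.trans (ℝ ∙ (ψ v - w))ᗮ.reflection, Submodule.reflection_sub ?_⟩
  rw [ψ.norm_map, hvw]

variable [MeasurableSpace E] [BorelSpace E] {V : Type*} [NormedAddCommGroup V]
  [InnerProductSpace ℝ V] [FiniteDimensional ℝ V] [MeasurableSpace V] [BorelSpace V]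

theorem volume_thickSphere_inter_thickSphere_le (hEV : finrank ℝ E = finrank ℝ V + 1)
    (hV : 2 ≤ finrank ℝ V) {a b : E} (hab : a ≠ b) {r s δ R : ℝ} (hδ : 0 ≤ δ) (hδr : δ ≤ r)
    (hδs : δ ≤ s) (hR : r + δ ≤ R) :
    volume (thickSphere a r δ ∩ thickSphere b s δ) ≤
      ENNReal.ofReal (2 * (r + s) * δ / dist a b) *
        (ENNReal.ofReal (finrank ℝ V * R ^ (finrank ℝ V - 2) * (4 * r * δ)) *
          volume (ball (0 : V) 1)) := by
  set c := dist a b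
  have hc : 0 < c := dist_pos.2 hab
  obtain ⟨φ, hφ⟩ : ∃ φ : WithLp 2 (ℝ × V) ≃ₗᵢ[ℝ] E, φ (toLp 2 (c, 0)) = b - a := by
    refine exists_linearIsometryEquiv_apply_eq ?_ ?_
    · rw [(WithLp.linearEquiv 2 ℝ (ℝ × V)).finrank_eq, finrank_prod, finrank_self, hEV, add_comm]
    rw [← dist_eq_norm', prod_norm_eq_of_L2]
    simp [c, abs_of_pos hc]
  let g : ℝ × V → E := fun p ↦ φ (toLp 2 p) + a
  have hg : MeasurePreserving g volume volume :=
    ((measurePreserving_add_right volume a).comp φ.measurePreserving).comp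
      (WithLp.volume_preserving_toLp ℝ V)
  have hg_dist (p q : ℝ × V) : dist (g p) (g q) ^ 2 = (p.1 - q.1) ^ 2 + ‖p.2 - q.2‖ ^ 2 := by
    rw [dist_add_right, φ.dist_map, dist_eq_norm, ← toLp_sub, prod_norm_sq_eq_of_L2]
    simp
  have hga : g 0 = a := by simp [g]
  have hgb : g (c, 0) = b := by simp [g, hφ]
  have hS : MeasurableSet (thickSphere a r δ ∩ thickSphere b s δ) := by
    unfold thickSphere; measurability
  rw [← hg.measure_preimage hS.nullMeasurableSet]
  -- `2 c t = c² + ‖p‖² - ‖p - (c, 0)‖²` confines `t = p.1` to `[l, u]`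
  refine (measure_mono fun p hp ↦ ?_).trans ((prod_shell_inter_slab_le volume hV
    (α := (r - δ) ^ 2) (β := (r + δ) ^ 2) (R := R) (by nlinarith) (by linarith)
    (pow_le_pow_left₀ (by linarith) hR 2)
    (l := (c ^ 2 + (r - δ) ^ 2 - (s + δ) ^ 2) / (2 * c))
    (u := (c ^ 2 + (r + δ) ^ 2 - (s - δ) ^ 2) / (2 * c))).trans_eq ?_)
  · obtain ⟨⟨h₁, h₂⟩, h₃, h₄⟩ := hp
    rw [← hga] at h₁ h₂
    rw [← hgb] at h₃ h₄
    have ha := hg_dist p 0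
    have hb := hg_dist p (c, 0)
    simp only [Prod.fst_zero, Prod.snd_zero, sub_zero] at ha hb
    have h₁' := pow_le_pow_left₀ (by linarith) h₁ 2
    have h₂' := pow_le_pow_left₀ dist_nonneg h₂ 2
    have h₃' := pow_le_pow_left₀ (by linarith) h₃ 2
    have h₄' := pow_le_pow_left₀ dist_nonneg h₄ 2
    refine ⟨⟨by linarith, by linarith⟩, ?_, ?_⟩
    · rw [div_le_iff₀ (by positivity)]; nlinarith
    · rw [le_div_iff₀ (by positivity)]; nlinarith
  · rw [show (r + δ) ^ 2 - (r - δ) ^ 2 = 4 * r * δ by ring]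
    congr 2
    field_simp
    ring

theorem exists_volume_thickSphere_inter_thickSphere_le (hE : 3 ≤ finrank ℝ E) :
    ∃ K : ℝ, 0 ≤ K ∧ ∀ (a b : E) (r s δ : ℝ), a ≠ b → 0 ≤ δ → δ ≤ r → δ ≤ s → r ≤ 2 → s ≤ 2 →
      δ ≤ 1 → volume (thickSphere a r δ ∩ thickSphere b s δ) ≤
        ENNReal.ofReal (K * δ ^ 2 / dist a b) := by
  let V := EuclideanSpace ℝ (Fin (finrank ℝ E - 1))
  have hVE : finrank ℝ V = finrank ℝ E - 1 := finrank_euclideanSpace_fin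
  set k := finrank ℝ V
  set ω := (volume (ball (0 : V) 1)).toReal
  refine ⟨k * 3 ^ (k - 2) * 64 * ω, by positivity,
    fun a b r s δ hab hδ hδr hδs hr hs hδ₁ ↦ ?_⟩
  have hw : 0 ≤ 2 * (r + s) * δ / dist a b := div_nonneg (by nlinarith) dist_nonneg
  refine (volume_thickSphere_inter_thickSphere_le (V := V) (by omega) (by omega) hab hδ hδr hδs
    (R := 3) (by linarith)).trans ?_
  have hP : 0 ≤ k * 3 ^ (k - 2) * (4 * r * δ) := mul_nonneg (by positivity) (by nlinarith)
  rw [← mul_assoc, ← ENNReal.ofReal_mul hw]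
  refine ofReal_mul_le_ofReal measure_ball_lt_top.ne (mul_nonneg hw hP) ?_
  calc 2 * (r + s) * δ / dist a b * (k * 3 ^ (k - 2) * (4 * r * δ)) * ω
      ≤ 8 * δ / dist a b * (k * 3 ^ (k - 2) * (8 * δ)) * ω := by
        gcongr <;> linarith
    _ = k * 3 ^ (k - 2) * 64 * ω * δ ^ 2 / dist a b := by ring

end InnerProductSpace

/-- For `n ≥ 3` there is a constant `C = C(n)` such that for all
`a, b ∈ ℝⁿ`, radii `r, s ∈ [1/2, 2]` and `0 < δ < 1/2`, with `d = |a−b| + |r−s|`,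
`|S^δ(a,r) ∩ S^δ(b,s)| ≤ C · δ² / (d + δ)`. -/
theorem stmt2 (n : ℕ) (hn : 3 ≤ n) :
    ∃ C : ℝ, 0 < C ∧
      ∀ (a b : EuclideanSpace ℝ (Fin n)) (r s δ : ℝ),
        r ∈ Set.Icc (1/2 : ℝ) 2 → s ∈ Set.Icc (1/2 : ℝ) 2 →
        0 < δ → δ < 1/2 →
        volume ({x : EuclideanSpace ℝ (Fin n) | r - δ ≤ dist x a ∧ dist x a ≤ r + δ} ∩
                {x : EuclideanSpace ℝ (Fin n) | s - δ ≤ dist x b ∧ dist x b ≤ s + δ}) ≤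
          ENNReal.ofReal (C * δ ^ 2 / ((dist a b + |r - s|) + δ)) := by
  have hE : finrank ℝ (EuclideanSpace ℝ (Fin n)) = n := finrank_euclideanSpace_fin
  obtain ⟨K₁, hK₁, h_near⟩ :=
    exists_addHaar_thickSphere_le (E := EuclideanSpace ℝ (Fin n)) volume (by omega)
  obtain ⟨K₂, hK₂, h_far⟩ :=
    exists_volume_thickSphere_inter_thickSphere_le (E := EuclideanSpace ℝ (Fin n)) (by omega)
  refine ⟨5 * (K₁ + K₂), by positivity, fun a b r s δ ⟨hr₁, hr₂⟩ ⟨hs₁, hs₂⟩ hδ hδ₁ ↦ ?_⟩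
  change volume (thickSphere a r δ ∩ thickSphere b s δ) ≤ _
  by_cases hrs : dist a b + 2 * δ < |r - s|
  · simp [thickSphere_inter_thickSphere_eq_empty hrs]
  have hd : dist a b + |r - s| + δ ≤ 2 * dist a b + 3 * δ := by linarith
  rcases le_or_gt (dist a b) δ with hab | hab
  · calc volume (thickSphere a r δ ∩ thickSphere b s δ)
        ≤ volume (thickSphere a r δ) := measure_mono inter_subset_left
      _ ≤ ENNReal.ofReal (K₁ * δ) := h_near a r δ hδ.le (by linarith) hr₂ (by linarith)
      _ = ENNReal.ofReal (5 * K₁ * δ ^ 2 / (5 * δ)) := by congr 1; field_simp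
      _ ≤ _ := by gcongr <;> linarith
  · calc volume (thickSphere a r δ ∩ thickSphere b s δ)
        ≤ ENNReal.ofReal (K₂ * δ ^ 2 / dist a b) := h_far a b r s δ (dist_pos.1 (hδ.trans hab))
          hδ.le (by linarith) (by linarith) hr₂ hs₂ (by linarith)
      _ = ENNReal.ofReal (5 * K₂ * δ ^ 2 / (5 * dist a b)) := by congr 1; field_simp
      _ ≤ _ := by gcongr <;> linarith
end
end

section
/- There exist absolute constants c₁, c₂ > 0 such that: if n ≥ 3, a₁, a₂, a₃ ∈ ℝⁿ are distinct points, 0 < δ < 1/2, and the circumradius R of the triangle a₁a₂a₃ satisfies R ≥ 2, and c₁·δ^{1/2} ≤ m ≤ M ≤ c₂ where M and m are the longest and shortest side lengths of the triangle, then the intersection of the δ-neighborhoods of the three unit spheres centered at a₁, a₂, a₃ is empty. -/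
/-!
Translate so that `a₁ = 0` and write `e = a₂ - a₁`, `f = a₃ - a₁`, `Δ = ‖e‖²‖f‖² - ⟪e, f⟫²`.
The linear map `z ↦ ⟪z, e⟫ f - ⟪z, f⟫ e` (in `ℝ³` it is `z ↦ (e × f) × z`) scales lengths by at
most `√Δ`, and by exactly `√Δ` on `span {e, f}`. The circumcentre `o` satisfies
`⟪o, e⟫ = ‖e‖²/2`, `⟪o, f⟫ = ‖f‖²/2`, so its image `c = (‖e‖²/2) f - (‖f‖²/2) e` has
`‖c‖ = ‖e‖‖f‖‖f - e‖/2`, and `R ≥ 2` gives `‖c‖ ≥ 2√Δ` (trivially so for collinear points).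
A point `x` of the three annuli has `‖x‖ ≤ 1 + δ` and `⟪x, e⟫`, `⟪x, f⟫` within `2δ` of `‖e‖²/2`,
`‖f‖²/2`. So `c` is the image of `x`, of length at most `(1 + δ)√Δ ≤ 3‖c‖/4`, plus a vector of
length at most `2δ(‖e‖ + ‖f‖)`. Hence `‖e‖‖f‖‖f - e‖ ≤ 16δ(‖e‖ + ‖f‖)`, which is impossible once
all sides are at least `6√δ`.
-/

open Set Submodule
open scoped RealInnerProductSpace

section

variable {E : Type*} [NormedAddCommGroup E] [InnerProductSpace ℝ E]

def gramDet (e f : E) : ℝ := ‖e‖ ^ 2 * ‖f‖ ^ 2 - ⟪e, f⟫ ^ 2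

lemma gramDet_nonneg (e f : E) : 0 ≤ gramDet e f := by
  rw [gramDet, sub_nonneg, ← mul_pow, sq_le_sq, abs_mul, abs_norm, abs_norm]
  exact abs_real_inner_le_norm e f

lemma norm_smul_sub_smul_sq (e f : E) (a b : ℝ) :
    ‖a • f - b • e‖ ^ 2 = a ^ 2 * ‖f‖ ^ 2 - 2 * (a * b) * ⟪e, f⟫ + b ^ 2 * ‖e‖ ^ 2 := by
  rw [norm_sub_sq_real, norm_smul, norm_smul, real_inner_smul_left, real_inner_smul_right,
    Real.norm_eq_abs, Real.norm_eq_abs, mul_pow, mul_pow, sq_abs, sq_abs, real_inner_comm]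
  ring

lemma norm_inner_smul_sub_inner_smul_sq_of_mem_span {e f z : E} (hz : z ∈ span ℝ {e, f}) :
    ‖⟪z, e⟫ • f - ⟪z, f⟫ • e‖ ^ 2 = ‖z‖ ^ 2 * gramDet e f := by
  obtain ⟨s, t, rfl⟩ := mem_span_pair.1 hz
  rw [norm_smul_sub_smul_sq, norm_add_sq_real, norm_smul, norm_smul, gramDet]
  simp only [inner_add_left, real_inner_smul_left, real_inner_smul_right,
    real_inner_self_eq_norm_sq, Real.norm_eq_abs, mul_pow, sq_abs, real_inner_comm e f]
  ring

lemma norm_inner_smul_sub_inner_smul_sq_le (e f w : E) :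
    ‖⟪w, e⟫ • f - ⟪w, f⟫ • e‖ ^ 2 ≤ ‖w‖ ^ 2 * gramDet e f := by
  set K := span ℝ {e, f}
  have : FiniteDimensional ℝ K := FiniteDimensional.span_of_finite ℝ (toFinite _)
  have inner_eq {u : E} (hu : u ∈ K) : ⟪w, u⟫ = ⟪K.starProjection w, u⟫ := by
    rw [← sub_eq_zero, ← inner_sub_left]
    exact inner_left_of_mem_orthogonal hu (K.sub_starProjection_mem_orthogonal w)
  rw [inner_eq (subset_span (by simp)), inner_eq (subset_span (by simp)),
    norm_inner_smul_sub_inner_smul_sq_of_mem_span (K.starProjection_apply_mem w)]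
  gcongr
  · exact gramDet_nonneg e f
  · exact K.norm_starProjection_apply_le w

lemma exists_mem_span_inner_eq {e f : E} (hΔ : 0 < gramDet e f) (a b : ℝ) :
    ∃ z ∈ span ℝ {e, f}, ⟪z, e⟫ = a ∧ ⟪z, f⟫ = b := by
  refine ⟨((a * ‖f‖ ^ 2 - b * ⟪e, f⟫) / gramDet e f) • e
      + ((b * ‖e‖ ^ 2 - a * ⟪e, f⟫) / gramDet e f) • f, mem_span_pair.2 ⟨_, _, rfl⟩, ?_, ?_⟩ <;>
  · simp only [inner_add_left, real_inner_smul_left, real_inner_self_eq_norm_sq,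
      real_inner_comm e f]
    field_simp
    rw [gramDet]
    ring

lemma four_mul_gramDet_le_of_forall_two_le_norm {e f : E}
    (h : ∀ z, ⟪z, e⟫ = ‖e‖ ^ 2 / 2 → ⟪z, f⟫ = ‖f‖ ^ 2 / 2 → 2 ≤ ‖z‖) :
    4 * gramDet e f ≤ ‖(‖e‖ ^ 2 / 2) • f - (‖f‖ ^ 2 / 2) • e‖ ^ 2 := by
  rcases (gramDet_nonneg e f).eq_or_lt with hΔ | hΔ
  · rw [← hΔ, mul_zero]
    positivity
  obtain ⟨z, hz, hze, hzf⟩ := exists_mem_span_inner_eq hΔ (‖e‖ ^ 2 / 2) (‖f‖ ^ 2 / 2)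
  rw [← hze, ← hzf, norm_inner_smul_sub_inner_smul_sq_of_mem_span hz]
  have h2 := h z hze hzf
  calc 4 * gramDet e f = 2 ^ 2 * gramDet e f := by norm_num
    _ ≤ ‖z‖ ^ 2 * gramDet e f := by gcongr

lemma norm_half_sq_smul_sub_half_sq_smul (e f : E) :
    ‖(‖e‖ ^ 2 / 2) • f - (‖f‖ ^ 2 / 2) • e‖ = ‖e‖ * ‖f‖ * ‖f - e‖ / 2 := by
  rw [← sq_eq_sq₀ (norm_nonneg _) (by positivity), norm_smul_sub_smul_sq,
    show (‖e‖ * ‖f‖ * ‖f - e‖ / 2) ^ 2 = ‖e‖ ^ 2 * ‖f‖ ^ 2 * ‖f - e‖ ^ 2 / 4 by ring,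
    norm_sub_sq_real, real_inner_comm]
  ring

theorem norm_mul_norm_mul_norm_sub_le {e f w : E} {δ : ℝ} (hw : ‖w‖ ≤ 3 / 2)
    (he : |‖e‖ ^ 2 / 2 - ⟪w, e⟫| ≤ 2 * δ) (hf : |‖f‖ ^ 2 / 2 - ⟪w, f⟫| ≤ 2 * δ)
    (hR : ∀ z, ⟪z, e⟫ = ‖e‖ ^ 2 / 2 → ⟪z, f⟫ = ‖f‖ ^ 2 / 2 → 2 ≤ ‖z‖) :
    ‖e‖ * ‖f‖ * ‖f - e‖ ≤ 16 * δ * (‖e‖ + ‖f‖) := by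
  set c := (‖e‖ ^ 2 / 2) • f - (‖f‖ ^ 2 / 2) • e
  set ε₁ := ‖e‖ ^ 2 / 2 - ⟪w, e⟫
  set ε₂ := ‖f‖ ^ 2 / 2 - ⟪w, f⟫
  have hsplit : c = (⟪w, e⟫ • f - ⟪w, f⟫ • e) + (ε₁ • f - ε₂ • e) := by
    simp only [c, ε₁, ε₂, sub_smul]
    abel
  have hw' : ‖⟪w, e⟫ • f - ⟪w, f⟫ • e‖ ≤ ‖w‖ * ‖c‖ / 2 := by
    refine (pow_le_pow_iff_left₀ (norm_nonneg _) (by positivity) two_ne_zero).1 ?_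
    calc ‖⟪w, e⟫ • f - ⟪w, f⟫ • e‖ ^ 2 ≤ ‖w‖ ^ 2 * gramDet e f :=
          norm_inner_smul_sub_inner_smul_sq_le e f w
      _ ≤ ‖w‖ ^ 2 * (‖c‖ ^ 2 / 4) := by
          gcongr
          linarith [four_mul_gramDet_le_of_forall_two_le_norm hR]
      _ = (‖w‖ * ‖c‖ / 2) ^ 2 := by ring
  have hε : ‖ε₁ • f - ε₂ • e‖ ≤ 2 * δ * (‖e‖ + ‖f‖) := by
    calc ‖ε₁ • f - ε₂ • e‖ ≤ |ε₁| * ‖f‖ + |ε₂| * ‖e‖ := by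
          simpa only [norm_smul, Real.norm_eq_abs] using norm_sub_le (ε₁ • f) (ε₂ • e)
      _ ≤ 2 * δ * ‖f‖ + 2 * δ * ‖e‖ := by gcongr
      _ = 2 * δ * (‖e‖ + ‖f‖) := by ring
  have hc : ‖c‖ ≤ ‖w‖ * ‖c‖ / 2 + 2 * δ * (‖e‖ + ‖f‖) := by
    calc ‖c‖ ≤ ‖⟪w, e⟫ • f - ⟪w, f⟫ • e‖ + ‖ε₁ • f - ε₂ • e‖ := hsplit ▸ norm_add_le _ _
      _ ≤ ‖w‖ * ‖c‖ / 2 + 2 * δ * (‖e‖ + ‖f‖) := add_le_add hw' hε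
  rw [norm_half_sq_smul_sub_half_sq_smul] at hc
  nlinarith [mul_le_mul_of_nonneg_right hw (by positivity : 0 ≤ ‖e‖ * ‖f‖ * ‖f - e‖ / 2)]

lemma dist_eq_dist_iff_inner_eq {a b o : E} :
    dist o a = dist o b ↔ ⟪o - a, b - a⟫ = ‖b - a‖ ^ 2 / 2 := by
  rw [← AffineSubspace.mem_perpBisector_iff_dist_eq, AffineSubspace.mem_perpBisector_iff_inner_eq,
    dist_comm, dist_eq_norm]
  rfl

lemma abs_half_norm_sq_sub_inner_le {a b x : E} {δ : ℝ} (hδ : δ ≤ 1)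
    (ha : dist x a ∈ Icc (1 - δ) (1 + δ)) (hb : dist x b ∈ Icc (1 - δ) (1 + δ)) :
    |‖b - a‖ ^ 2 / 2 - ⟪x - a, b - a⟫| ≤ 2 * δ := by
  have h : ‖b - a‖ ^ 2 / 2 - ⟪x - a, b - a⟫ = (dist x b ^ 2 - dist x a ^ 2) / 2 := by
    rw [dist_eq_norm, dist_eq_norm, ← sub_sub_sub_cancel_right x b a,
      norm_sub_sq_real (x - a)]
    ring
  obtain ⟨ha₁, ha₂⟩ := ha
  obtain ⟨hb₁, hb₂⟩ := hb
  rw [h, abs_le]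
  constructor <;> nlinarith

theorem dist_mul_dist_mul_dist_le_of_mem_annuli {a₁ a₂ a₃ x : E} {δ : ℝ} (hδ : δ < 1 / 2)
    (hR : ∀ o, dist o a₁ = dist o a₂ → dist o a₂ = dist o a₃ → 2 ≤ dist o a₁)
    (h₁ : dist x a₁ ∈ Icc (1 - δ) (1 + δ)) (h₂ : dist x a₂ ∈ Icc (1 - δ) (1 + δ))
    (h₃ : dist x a₃ ∈ Icc (1 - δ) (1 + δ)) :
    dist a₁ a₂ * dist a₁ a₃ * dist a₂ a₃ ≤ 16 * δ * (dist a₁ a₂ + dist a₁ a₃) := by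
  have hw : ‖x - a₁‖ ≤ 3 / 2 := by
    rw [← dist_eq_norm]
    linarith [h₁.2]
  have hcirc (z : E) (he : ⟪z, a₂ - a₁⟫ = ‖a₂ - a₁‖ ^ 2 / 2)
      (hf : ⟪z, a₃ - a₁⟫ = ‖a₃ - a₁‖ ^ 2 / 2) : 2 ≤ ‖z‖ := by
    have h₁₂ : dist (z + a₁) a₁ = dist (z + a₁) a₂ :=
      dist_eq_dist_iff_inner_eq.2 (by rwa [add_sub_cancel_right])
    have h₁₃ : dist (z + a₁) a₁ = dist (z + a₁) a₃ :=
      dist_eq_dist_iff_inner_eq.2 (by rwa [add_sub_cancel_right])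
    simpa using hR (z + a₁) h₁₂ (h₁₂.symm.trans h₁₃)
  have key := norm_mul_norm_mul_norm_sub_le hw (abs_half_norm_sq_sub_inner_le (by linarith) h₁ h₂)
    (abs_half_norm_sq_sub_inner_le (by linarith) h₁ h₃) hcirc
  rwa [sub_sub_sub_cancel_right, ← dist_eq_norm, ← dist_eq_norm, ← dist_eq_norm, dist_comm a₂,
    dist_comm a₃, dist_comm a₃] at key

lemma sq_mul_add_le_two_mul {m u v s : ℝ} (hm : 0 ≤ m) (hu : m ≤ u) (hv : m ≤ v) (hs : m ≤ s) :
    m ^ 2 * (u + v) ≤ 2 * (u * v * s) := by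
  have huv : m * (u + v) ≤ 2 * (u * v) := by nlinarith
  calc m ^ 2 * (u + v) = m * (m * (u + v)) := by ring
    _ ≤ s * (2 * (u * v)) := mul_le_mul hs huv (mul_nonneg hm (by linarith)) (by linarith)
    _ = 2 * (u * v * s) := by ring

end

/-- There are absolute constants `c₁, c₂ > 0` such that whenever
`n ≥ 3`, `a₁, a₂, a₃ ∈ ℝⁿ` are distinct, `0 < δ < 1/2`, the circumradius of the
triangle is at least `2` (expressed as: every point equidistant from `a₁, a₂, a₃`
is at distance at least `2` from them; this holds vacuously when the points are
collinear, i.e. `R = ∞`), and `c₁ δ^{1/2} ≤ m ≤ M ≤ c₂` for the shortest and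
longest side lengths `m, M`, then the three `δ`-annuli of unit spheres centered at
`a₁, a₂, a₃` have empty intersection. -/
theorem stmt4 :
    ∃ c₁ c₂ : ℝ, 0 < c₁ ∧ 0 < c₂ ∧
      ∀ (n : ℕ), 3 ≤ n →
      ∀ (a₁ a₂ a₃ : EuclideanSpace ℝ (Fin n)) (δ : ℝ),
        a₁ ≠ a₂ → a₂ ≠ a₃ → a₁ ≠ a₃ →
        0 < δ → δ < 1/2 →
        (∀ o : EuclideanSpace ℝ (Fin n),
          dist o a₁ = dist o a₂ → dist o a₂ = dist o a₃ → 2 ≤ dist o a₁) →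
        c₁ * Real.sqrt δ ≤ min (dist a₁ a₂) (min (dist a₂ a₃) (dist a₃ a₁)) →
        max (dist a₁ a₂) (max (dist a₂ a₃) (dist a₃ a₁)) ≤ c₂ →
        ({x : EuclideanSpace ℝ (Fin n) | 1 - δ ≤ dist x a₁ ∧ dist x a₁ ≤ 1 + δ} ∩
         {x : EuclideanSpace ℝ (Fin n) | 1 - δ ≤ dist x a₂ ∧ dist x a₂ ≤ 1 + δ} ∩
         {x : EuclideanSpace ℝ (Fin n) | 1 - δ ≤ dist x a₃ ∧ dist x a₃ ≤ 1 + δ}) = ∅ := by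
  refine ⟨6, 1, by norm_num, by norm_num, ?_⟩
  intro n _ a₁ a₂ a₃ δ _ _ _ hδ₀ hδ hR hm _
  refine eq_empty_iff_forall_notMem.2 fun x ⟨⟨h₁, h₂⟩, h₃⟩ => ?_
  have hupper := dist_mul_dist_mul_dist_le_of_mem_annuli hδ hR h₁ h₂ h₃
  set m := min (dist a₁ a₂) (min (dist a₂ a₃) (dist a₃ a₁))
  have hm₀ : 0 < m := lt_of_lt_of_le (by positivity) hm
  have hm₂ : 36 * δ ≤ m ^ 2 := by
    calc 36 * δ = (6 * Real.sqrt δ) ^ 2 := by rw [mul_pow, Real.sq_sqrt hδ₀.le]; norm_num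
      _ ≤ m ^ 2 := by gcongr
  have hlower := sq_mul_add_le_two_mul hm₀.le (min_le_left _ _)
    (((min_le_right _ _).trans (min_le_right _ _)).trans_eq (dist_comm a₃ a₁))
    ((min_le_right _ _).trans (min_le_left _ _))
  have hsum : 0 < dist a₁ a₂ + dist a₁ a₃ := by
    linarith [min_le_left (dist a₁ a₂) (min (dist a₂ a₃) (dist a₃ a₁)),
      dist_nonneg (x := a₁) (y := a₃)]
  linarith [mul_le_mul_of_nonneg_right hm₂ hsum.le, mul_pos hδ₀ hsum]
end

section
/- Let n ≥ 2, δ ∈ (0,1/2), A > 0, and let {S_i}_{i∈I} be a finite collection of spheres in ℝⁿ with radii in [1/2,2], identified with points in ℝ^{n+1}, satisfying #{i : S_i ∈ B_ρ} ≤ A ρ for every ball B_ρ ⊂ ℝ^{n+1} of radius ρ ≥ δ. Assume n ≥ 3. Then for all nonnegative coefficients a_i, ‖Σ_i a_i 1_{S_i^δ}‖_{L²(ℝⁿ)} ≤ C δ log(1/δ) A^{1/2} (Σ_i a_i²)^{1/2}. -/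
/-!
Expanding the square and applying Cauchy–Schwarz pointwise gives
`‖∑ aᵢ 1_{Sᵢ^δ}‖₂² ≤ ∑ᵢ aᵢ² ∑ⱼ |Sᵢ^δ ∩ Sⱼ^δ|`, so it suffices to bound each inner sum by
`δ² A log(1/δ)`. Two δ-annuli with radii in `[1/2, 2]` meet in volume `≲ δ² / (|Sᵢ - Sⱼ| + δ)`:
after an isometry the centres are `0` and `d e₀`, the intersection lies in a slab
`{|y₀ - c| ≲ δ / d}`, and every slice of that slab is a shell of thickness `≲ δ` in `ℝⁿ⁻¹`, of
volume `≲ δ` because `n - 1 ≥ 2`. Splitting the sum over `j` into dyadic ranges of `|Sᵢ - Sⱼ|`,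
the non-concentration hypothesis bounds `∑ⱼ 1 / (|Sᵢ - Sⱼ| + δ)` by `A` per scale, and there are
`≲ log(1/δ)` scales.
-/

open MeasureTheory Metric Set Finset

noncomputable section

lemma enorm_sum_mul_indicator_sq_le {α ι : Type*} (I : Finset ι) (E : ι → Set α) (a : ι → ℝ)
    (w : α) :
    ‖∑ i ∈ I, a i * (E i).indicator (fun _ => (1 : ℝ)) w‖ₑ ^ 2 ≤
      ∑ i ∈ I, ∑ j ∈ I, (E i ∩ E j).indicator (fun _ => ENNReal.ofReal (a i ^ 2)) w := by
  set x : ι → ℝ := fun i => (E i).indicator (fun _ => 1) w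
  have hx : ∀ i, 0 ≤ x i := fun i => indicator_nonneg (fun _ _ => zero_le_one) w
  have hterm : ∀ i j, 0 ≤ a i ^ 2 * x i * x j := fun i j =>
    mul_nonneg (mul_nonneg (sq_nonneg _) (hx i)) (hx j)
  have hind : ∀ i j, (E i ∩ E j).indicator (fun _ => ENNReal.ofReal (a i ^ 2)) w =
      ENNReal.ofReal (a i ^ 2 * x i * x j) := by
    intro i j
    by_cases hi : w ∈ E i <;> by_cases hj : w ∈ E j <;> simp [x, hi, hj]
  -- Cauchy–Schwarz for `∑ (aᵢ xᵢ) xᵢ`, since `xᵢ ∈ {0, 1}`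
  have hCS : (∑ i ∈ I, a i * x i) ^ 2 ≤ ∑ i ∈ I, ∑ j ∈ I, a i ^ 2 * x i * x j := by
    rw [← sum_mul_sum]
    refine sum_sq_le_sum_mul_sum_of_sq_le_mul I (fun i _ => mul_nonneg (sq_nonneg _) (hx i))
      (fun i _ => hx i) fun i _ => le_of_eq ?_
    by_cases hi : w ∈ E i <;> simp [x, hi]
  simp_rw [hind]
  calc ‖∑ i ∈ I, a i * x i‖ₑ ^ 2 = ENNReal.ofReal ((∑ i ∈ I, a i * x i) ^ 2) := by
        rw [Real.enorm_eq_ofReal_abs, ← ENNReal.ofReal_pow (abs_nonneg _), sq_abs]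
    _ ≤ ENNReal.ofReal (∑ i ∈ I, ∑ j ∈ I, a i ^ 2 * x i * x j) := ENNReal.ofReal_le_ofReal hCS
    _ = ∑ i ∈ I, ∑ j ∈ I, ENNReal.ofReal (a i ^ 2 * x i * x j) := by
        rw [ENNReal.ofReal_sum_of_nonneg fun i _ => sum_nonneg fun j _ => hterm i j]
        simp_rw [ENNReal.ofReal_sum_of_nonneg fun j _ => hterm _ j]

lemma eLpNorm_sum_mul_indicator_sq_le {α ι : Type*} [MeasurableSpace α] (μ : Measure α)
    (I : Finset ι) {E : ι → Set α} (hE : ∀ i, MeasurableSet (E i)) (a : ι → ℝ) :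
    eLpNorm (fun w => ∑ i ∈ I, a i * (E i).indicator (fun _ => (1 : ℝ)) w) 2 μ ^ 2 ≤
      ∑ i ∈ I, ENNReal.ofReal (a i ^ 2) * ∑ j ∈ I, μ (E i ∩ E j) := by
  have hmeas : ∀ i j, Measurable ((E i ∩ E j).indicator fun _ => ENNReal.ofReal (a i ^ 2)) :=
    fun i j => measurable_const.indicator ((hE i).inter (hE j))
  have hL2 := eLpNorm_nnreal_pow_eq_lintegral (μ := μ) (p := 2) two_ne_zero
    (f := fun w => ∑ i ∈ I, a i * (E i).indicator (fun _ => (1 : ℝ)) w)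
  norm_num at hL2
  rw [hL2]
  calc ∫⁻ w, ‖∑ i ∈ I, a i * (E i).indicator (fun _ => (1 : ℝ)) w‖ₑ ^ 2 ∂μ
      ≤ ∫⁻ w, ∑ i ∈ I, ∑ j ∈ I, (E i ∩ E j).indicator (fun _ => ENNReal.ofReal (a i ^ 2)) w ∂μ :=
        lintegral_mono fun w => enorm_sum_mul_indicator_sq_le I E a w
    _ = ∑ i ∈ I, ENNReal.ofReal (a i ^ 2) * ∑ j ∈ I, μ (E i ∩ E j) := by
        rw [lintegral_finsetSum _ fun i _ => Finset.measurable_sum _ fun j _ => hmeas i j]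
        refine sum_congr rfl fun i _ => ?_
        rw [lintegral_finsetSum _ fun j _ => hmeas i j, mul_sum]
        exact sum_congr rfl fun j _ => lintegral_indicator_const ((hE i).inter (hE j)) _

lemma eLpNorm_sum_mul_indicator_le_of_sum_measure_inter_le {α ι : Type*} [MeasurableSpace α]
    (μ : Measure α) (I : Finset ι) {E : ι → Set α} (hE : ∀ i, MeasurableSet (E i)) (a : ι → ℝ)
    {W : ℝ} (hW : 0 ≤ W) (h : ∀ i ∈ I, ∑ j ∈ I, μ (E i ∩ E j) ≤ ENNReal.ofReal W) :
    eLpNorm (fun w => ∑ i ∈ I, a i * (E i).indicator (fun _ => (1 : ℝ)) w) 2 μ ≤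
      ENNReal.ofReal (√W * √(∑ i ∈ I, a i ^ 2)) := by
  have hS : 0 ≤ ∑ i ∈ I, a i ^ 2 := sum_nonneg fun i _ => sq_nonneg _
  rw [← ENNReal.pow_le_pow_left_iff two_ne_zero, ← ENNReal.ofReal_pow (by positivity), mul_pow,
    Real.sq_sqrt hW, Real.sq_sqrt hS]
  calc eLpNorm (fun w => ∑ i ∈ I, a i * (E i).indicator (fun _ => (1 : ℝ)) w) 2 μ ^ 2
      ≤ ∑ i ∈ I, ENNReal.ofReal (a i ^ 2) * ∑ j ∈ I, μ (E i ∩ E j) :=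
        eLpNorm_sum_mul_indicator_sq_le μ I hE a
    _ ≤ ∑ i ∈ I, ENNReal.ofReal (a i ^ 2) * ENNReal.ofReal W := by
        gcongr with i hi
        exact h i hi
    _ = ENNReal.ofReal (W * ∑ i ∈ I, a i ^ 2) := by
        rw [← sum_mul, ← ENNReal.ofReal_sum_of_nonneg fun i _ => sq_nonneg _,
          ← ENNReal.ofReal_mul hS, mul_comm]

lemma one_div_add_le_two_mul_sum_dyadic {δ D : ℝ} (hδ : 0 < δ) (hD : 0 ≤ D) (N : ℕ)
    (hDN : D ≤ 2 ^ N * δ) :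
    1 / (D + δ) ≤ 2 * ∑ k ∈ range (N + 1), if D ≤ 2 ^ k * δ then 1 / (2 ^ k * δ) else 0 := by
  induction N with
  | zero =>
    rw [pow_zero, one_mul] at hDN
    simp only [zero_add, sum_range_one, pow_zero, one_mul, if_pos hDN]
    have : 1 / (D + δ) ≤ 1 / δ := one_div_le_one_div_of_le hδ (by linarith)
    linarith [one_div_pos.2 hδ]
  | succ N ih =>
    have hnonneg : 0 ≤ ∑ k ∈ range (N + 1), if D ≤ 2 ^ k * δ then 1 / (2 ^ k * δ) else 0 :=
      sum_nonneg fun k _ => by positivity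
    rw [sum_range_succ, if_pos hDN, mul_add]
    by_cases h : D ≤ 2 ^ N * δ
    · have := ih h
      have : 0 ≤ 1 / (2 ^ (N + 1) * δ) := by positivity
      linarith
    · push Not at h
      have : 1 / (D + δ) ≤ 2 * (1 / (2 ^ (N + 1) * δ)) := by
        rw [pow_succ, show 2 * (1 / (2 ^ N * 2 * δ)) = 1 / (2 ^ N * δ) by field_simp]
        gcongr
        linarith
      linarith

lemma sum_one_div_add_le_of_card_le {ι : Type*} {δ A : ℝ} (hδ : 0 < δ) (I : Finset ι)
    (D : ι → ℝ) (N : ℕ) (hD : ∀ j ∈ I, 0 ≤ D j ∧ D j ≤ 2 ^ N * δ)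
    (hcount : ∀ ρ, δ ≤ ρ → ((I.filter fun j => D j ≤ ρ).card : ℝ) ≤ A * ρ) :
    ∑ j ∈ I, 1 / (D j + δ) ≤ 2 * A * (N + 1) := by
  calc ∑ j ∈ I, 1 / (D j + δ)
      ≤ ∑ j ∈ I, 2 * ∑ k ∈ range (N + 1), if D j ≤ 2 ^ k * δ then 1 / (2 ^ k * δ) else 0 :=
        sum_le_sum fun j hj => one_div_add_le_two_mul_sum_dyadic hδ (hD j hj).1 N (hD j hj).2
    _ = 2 * ∑ k ∈ range (N + 1), ∑ j ∈ I, if D j ≤ 2 ^ k * δ then 1 / (2 ^ k * δ) else 0 := by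
        rw [← mul_sum, sum_comm]
    _ ≤ 2 * ∑ _k ∈ range (N + 1), A := by
        gcongr with k
        rw [← sum_filter, sum_const, nsmul_eq_mul]
        calc ((I.filter fun j => D j ≤ 2 ^ k * δ).card : ℝ) * (1 / (2 ^ k * δ))
            ≤ A * (2 ^ k * δ) * (1 / (2 ^ k * δ)) := by
              gcongr
              exact hcount _ (le_mul_of_one_le_left hδ.le (one_le_pow₀ one_le_two))
          _ = A := by field_simp
    _ = 2 * A * (N + 1) := by simp; ring

lemma exists_two_pow_mul_ge_and_le_log {M : ℝ} (hM : 1 ≤ M) :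
    ∃ c, 0 < c ∧ ∀ δ : ℝ, 0 < δ → δ < 1 / 2 →
      ∃ N : ℕ, M ≤ 2 ^ N * δ ∧ (N + 1 : ℝ) ≤ c * Real.log (1 / δ) := by
  have hl2 : 0 < Real.log 2 := Real.log_pos one_lt_two
  have hlM := Real.log_nonneg hM
  refine ⟨(Real.log M / Real.log 2 + 3) / Real.log 2, by positivity, fun δ hδ hδ₂ => ?_⟩
  obtain ⟨n, hn₁, hn₂⟩ := exists_nat_pow_near (x := M / δ)
    (by rw [le_div_iff₀ hδ]; linarith) one_lt_two
  refine ⟨n + 1, ((div_lt_iff₀ hδ).1 hn₂).le, ?_⟩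
  set L := Real.log (1 / δ)
  have hL : Real.log 2 ≤ L := Real.log_le_log two_pos (by rw [le_div_iff₀ hδ]; linarith)
  have hn : n * Real.log 2 ≤ Real.log M + L := by
    rw [← Real.log_pow, ← Real.log_mul (by positivity) (by positivity), mul_one_div]
    exact Real.log_le_log (by positivity) hn₁
  have hlogM : Real.log M ≤ Real.log M / Real.log 2 * L := by
    rw [div_mul_eq_mul_div, le_div_iff₀ hl2]
    exact mul_le_mul_of_nonneg_left hL hlM
  rw [div_mul_eq_mul_div, le_div_iff₀ hl2]
  push_cast
  linarith

section Annulus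

variable {E : Type*}

/-- For `δ ≤ r`, the closed `δ`-neighbourhood `S(p, r)^δ` of the sphere `S(p, r)`. -/
def annulus [PseudoMetricSpace E] (p : E) (r δ : ℝ) : Set E :=
  {y | r - δ ≤ dist y p ∧ dist y p ≤ r + δ}

lemma measurableSet_annulus [PseudoMetricSpace E] [MeasurableSpace E] [OpensMeasurableSpace E]
    (p : E) (r δ : ℝ) : MeasurableSet (annulus p r δ) :=
  have hd : Measurable fun y => dist y p := (continuous_id.dist continuous_const).measurable
  (measurableSet_le measurable_const hd).inter (measurableSet_le hd measurable_const)

lemma sq_dist_mem_Icc_of_mem_annulus [PseudoMetricSpace E] {p y : E} {r δ : ℝ} (hδr : δ ≤ r)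
    (hy : y ∈ annulus p r δ) : dist y p ^ 2 ∈ Set.Icc ((r - δ) ^ 2) ((r + δ) ^ 2) :=
  ⟨pow_le_pow_left₀ (by linarith) hy.1 2, pow_le_pow_left₀ dist_nonneg hy.2 2⟩

lemma abs_sub_le_dist_add_of_mem_annulus_inter [PseudoMetricSpace E] {p q y : E} {r s δ : ℝ}
    (hy : y ∈ annulus p r δ ∩ annulus q s δ) : |r - s| ≤ dist p q + 2 * δ := by
  obtain ⟨⟨hp₁, hp₂⟩, hq₁, hq₂⟩ := hy
  have h := abs_le.1 (abs_dist_sub_le p q y)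
  rw [dist_comm p y, dist_comm q y] at h
  rw [abs_le]
  constructor <;> linarith

lemma dist_prod_le_of_mem_annulus_inter [PseudoMetricSpace E] {p q y : E} {r s δ : ℝ}
    (hr : 0 ≤ r) (hs : 0 ≤ s) (hy : y ∈ annulus p r δ ∩ annulus q s δ) :
    dist (p, r) (q, s) ≤ r + s + 2 * δ := by
  obtain ⟨⟨hp₁, hp₂⟩, hq₁, hq₂⟩ := hy
  have h := dist_triangle_left p q y
  rw [Prod.dist_eq, Real.dist_eq]
  exact max_le (by linarith) (abs_le.2 ⟨by linarith, by linarith⟩)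

variable [NormedAddCommGroup E] [InnerProductSpace ℝ E]

open scoped RealInnerProductSpace in
lemma abs_two_mul_inner_sub_le_of_mem_annulus_inter {e y : E} (he : ‖e‖ = 1) {d r s δ : ℝ}
    (hδr : δ ≤ r) (hδs : δ ≤ s) (hy : y ∈ annulus 0 r δ ∩ annulus (d • e) s δ) :
    |2 * d * ⟪y, e⟫ - (r ^ 2 + d ^ 2 - s ^ 2)| ≤ 2 * δ * (r + s) := by
  obtain ⟨hr₁, hr₂⟩ := sq_dist_mem_Icc_of_mem_annulus hδr hy.1
  obtain ⟨hs₁, hs₂⟩ := sq_dist_mem_Icc_of_mem_annulus hδs hy.2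
  have hexp : dist y (d • e) ^ 2 = dist y 0 ^ 2 - 2 * d * ⟪y, e⟫ + d ^ 2 := by
    rw [dist_eq_norm, dist_zero_right, norm_sub_sq_real, real_inner_smul_right, norm_smul, he,
      mul_one, Real.norm_eq_abs, sq_abs]
    ring
  rw [abs_le]
  constructor <;> nlinarith

variable [FiniteDimensional ℝ E] [MeasurableSpace E] [BorelSpace E]

lemma volume_annulus_inter_eq_of_norm_eq {p q w : E} (hw : ‖w‖ = dist p q) (r s δ : ℝ) :
    volume (annulus p r δ ∩ annulus q s δ) = volume (annulus 0 r δ ∩ annulus w s δ) := by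
  set R := Submodule.reflection (ℝ ∙ (q - p - w))ᗮ
  have hR : R (q - p) = w := Submodule.reflection_sub (by rw [hw, dist_eq_norm, norm_sub_rev])
  have hg : MeasurePreserving (fun y => R (y - p)) :=
    R.measurePreserving.comp (measurePreserving_sub_right volume p)
  have hpre : (fun y => R (y - p)) ⁻¹' (annulus 0 r δ ∩ annulus w s δ) =
      annulus p r δ ∩ annulus q s δ := by
    ext y
    have h₀ : dist (R (y - p)) 0 = dist y p := by rw [dist_zero_right, R.norm_map, dist_eq_norm]
    have hw' : dist (R (y - p)) w = dist y q := by
      rw [← hR, R.dist_map, dist_eq_norm, dist_eq_norm, sub_sub_sub_cancel_right]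
    simp only [annulus, Set.mem_preimage, mem_inter_iff, Set.mem_ofPred_eq, h₀, hw']
  rw [← hpre, hg.measure_preimage
    ((measurableSet_annulus _ _ _).inter (measurableSet_annulus _ _ _)).nullMeasurableSet]

end Annulus

lemma pow_sub_pow_le_mul_sq_sub_sq_s17 (k : ℕ) {ρ R : ℝ} (hρ : 0 ≤ ρ) (hρR : ρ ≤ R) :
    R ^ (k + 2) - ρ ^ (k + 2) ≤ (k + 2) * R ^ k * (R ^ 2 - ρ ^ 2) := by
  have hR : 0 ≤ R := hρ.trans hρR
  have h := abs_pow_sub_pow_le R ρ (k + 2)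
  rw [abs_of_nonneg (sub_nonneg.2 (pow_le_pow_left₀ hρ hρR _)), abs_of_nonneg (sub_nonneg.2 hρR),
    abs_of_nonneg hρ, abs_of_nonneg hR, max_eq_left hρR] at h
  push_cast at h
  calc R ^ (k + 2) - ρ ^ (k + 2) ≤ (R - ρ) * (k + 2) * R ^ (k + 2 - 1) := h
    _ = (k + 2) * R ^ k * ((R - ρ) * R) := by rw [show k + 2 - 1 = k + 1 by omega]; ring
    _ ≤ (k + 2) * R ^ k * (R ^ 2 - ρ ^ 2) := by
      gcongr
      nlinarith

lemma addHaar_closedBall_sdiff_ball {E : Type*} [NormedAddCommGroup E] [NormedSpace ℝ E]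
    [MeasurableSpace E] [BorelSpace E] [FiniteDimensional ℝ E] [Nontrivial E] (μ : Measure E)
    [μ.IsAddHaarMeasure] (p : E) {ρ R : ℝ} (hρ : 0 ≤ ρ) (hρR : ρ ≤ R) :
    μ (closedBall p R \ ball p ρ) =
      ENNReal.ofReal (R ^ Module.finrank ℝ E - ρ ^ Module.finrank ℝ E) * μ (ball 0 1) := by
  rw [measure_sdiff (ball_subset_closedBall.trans (closedBall_subset_closedBall hρR))
      measurableSet_ball.nullMeasurableSet measure_ball_lt_top.ne,
    Measure.addHaar_closedBall _ _ (hρ.trans hρR), Measure.addHaar_ball _ _ hρ,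
    ← ENNReal.sub_mul fun _ _ => measure_ball_lt_top.ne, ENNReal.ofReal_sub _ (by positivity)]

lemma addHaar_norm_sq_mem_Icc_le_s17 {E : Type*} [NormedAddCommGroup E] [NormedSpace ℝ E]
    [MeasurableSpace E] [BorelSpace E] [FiniteDimensional ℝ E] (μ : Measure E)
    [μ.IsAddHaarMeasure] {k : ℕ} (hE : Module.finrank ℝ E = k + 2) {R a b : ℝ} (hb : b ≤ R ^ 2) :
    μ {y | ‖y‖ ^ 2 ∈ Set.Icc a b} ≤
      ENNReal.ofReal ((k + 2) * |R| ^ k * (b - a)) * μ (ball 0 1) := by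
  have : Nontrivial E := Module.nontrivial_of_finrank_eq_succ (n := k + 1) hE
  by_cases hab : max a 0 ≤ b
  swap
  · have hempty : {y : E | ‖y‖ ^ 2 ∈ Set.Icc a b} = ∅ := eq_empty_of_forall_notMem
      fun y ⟨h₁, h₂⟩ => hab (max_le (h₁.trans h₂) ((sq_nonneg _).trans h₂))
    rw [hempty, measure_empty]
    exact zero_le
  set ρ := √(max a 0)
  set S := √b
  have hρS : ρ ≤ S := Real.sqrt_le_sqrt hab
  have hS : S ≤ |R| := by rw [← Real.sqrt_sq_eq_abs]; exact Real.sqrt_le_sqrt hb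
  have hsub : {y : E | ‖y‖ ^ 2 ∈ Set.Icc a b} ⊆ closedBall 0 S \ ball 0 ρ := by
    rintro y ⟨h₁, h₂⟩
    simp only [Set.mem_sdiff, mem_closedBall, mem_ball, dist_zero_right, not_lt]
    refine ⟨Real.le_sqrt_of_sq_le h₂, ?_⟩
    rw [← Real.sqrt_sq (norm_nonneg y)]
    exact Real.sqrt_le_sqrt (max_le h₁ (sq_nonneg _))
  have hpow : S ^ (k + 2) - ρ ^ (k + 2) ≤ (k + 2) * |R| ^ k * (b - a) := by
    calc S ^ (k + 2) - ρ ^ (k + 2) ≤ (k + 2) * S ^ k * (S ^ 2 - ρ ^ 2) :=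
          pow_sub_pow_le_mul_sq_sub_sq_s17 k (Real.sqrt_nonneg _) hρS
      _ = (k + 2) * S ^ k * (b - max a 0) := by
          rw [Real.sq_sqrt (le_max_right a 0 |>.trans hab), Real.sq_sqrt (le_max_right a 0)]
      _ ≤ (k + 2) * |R| ^ k * (b - a) := by
          have hSk : S ^ k ≤ |R| ^ k := pow_le_pow_left₀ (Real.sqrt_nonneg _) hS k
          have hba : b - max a 0 ≤ b - a := by linarith [le_max_left a 0]
          gcongr
  calc μ {y | ‖y‖ ^ 2 ∈ Set.Icc a b} ≤ μ (closedBall 0 S \ ball 0 ρ) := measure_mono hsub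
    _ = ENNReal.ofReal (S ^ (k + 2) - ρ ^ (k + 2)) * μ (ball 0 1) := by
        rw [addHaar_closedBall_sdiff_ball μ 0 (Real.sqrt_nonneg _) hρS, hE]
    _ ≤ ENNReal.ofReal ((k + 2) * |R| ^ k * (b - a)) * μ (ball 0 1) := by gcongr

lemma exists_volume_sum_sq_mem_Icc_le (k : ℕ) (R : ℝ) : ∃ K, 0 ≤ K ∧ ∀ a b : ℝ, b ≤ R ^ 2 →
    volume {v : Fin (k + 2) → ℝ | ∑ i, v i ^ 2 ∈ Set.Icc a b} ≤ ENNReal.ofReal (K * (b - a)) := by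
  set ω := (volume (ball (0 : EuclideanSpace ℝ (Fin (k + 2))) 1)).toReal
  refine ⟨(k + 2) * |R| ^ k * ω, by positivity, fun a b hb => ?_⟩
  calc volume {v : Fin (k + 2) → ℝ | ∑ i, v i ^ 2 ∈ Set.Icc a b}
      = volume {y : EuclideanSpace ℝ (Fin (k + 2)) | ‖y‖ ^ 2 ∈ Set.Icc a b} := by
        rw [← (EuclideanSpace.volume_preserving_symm_measurableEquiv_toLp _).measure_preimage_equiv]
        simp [EuclideanSpace.real_norm_sq_eq]
    _ ≤ ENNReal.ofReal ((k + 2) * |R| ^ k * (b - a)) * ENNReal.ofReal ω := by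
        rw [ENNReal.ofReal_toReal measure_ball_lt_top.ne]
        exact addHaar_norm_sq_mem_Icc_le_s17 volume (finrank_euclideanSpace_fin) hb
    _ = ENNReal.ofReal ((k + 2) * |R| ^ k * ω * (b - a)) := by
        rw [← ENNReal.ofReal_mul' ENNReal.toReal_nonneg, mul_right_comm]

lemma exists_volume_slab_inter_norm_sq_mem_Icc_le (k : ℕ) (R : ℝ) : ∃ K, 0 ≤ K ∧
    ∀ lo hi a b : ℝ, a ≤ b → b ≤ R ^ 2 →
      volume {y : EuclideanSpace ℝ (Fin (k + 3)) | y 0 ∈ Set.Icc lo hi ∧ ‖y‖ ^ 2 ∈ Set.Icc a b} ≤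
        ENNReal.ofReal (K * (b - a) * (hi - lo)) := by
  obtain ⟨K, hK, hshell⟩ := exists_volume_sum_sq_mem_Icc_le k R
  refine ⟨K, hK, fun lo hi a b hab hb => ?_⟩
  let e := (MeasurableEquiv.toLp 2 (Fin (k + 3) → ℝ)).symm.trans
    (MeasurableEquiv.piFinSuccAbove (fun _ => ℝ) 0)
  have he : MeasurePreserving e :=
    (volume_preserving_piFinSuccAbove (fun _ => ℝ) 0).comp
      (EuclideanSpace.volume_preserving_symm_measurableEquiv_toLp _)
  set T : Set (ℝ × (Fin (k + 2) → ℝ)) :=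
    {z | z.1 ∈ Set.Icc lo hi ∧ z.1 ^ 2 + ∑ j, z.2 j ^ 2 ∈ Set.Icc a b}
  have hT : MeasurableSet T := by measurability
  have hslice : ∀ u, volume (Prod.mk u ⁻¹' T) ≤
      (Set.Icc lo hi).indicator (fun _ => ENNReal.ofReal (K * (b - a))) u := by
    intro u
    by_cases hu : u ∈ Set.Icc lo hi
    · rw [indicator_of_mem hu]
      convert hshell (a - u ^ 2) (b - u ^ 2) (by nlinarith) using 2
      · ext v
        simp only [T, Set.mem_preimage, Set.mem_ofPred_eq, Set.mem_Icc]
        exact ⟨fun ⟨_, h₁, h₂⟩ => ⟨by linarith, by linarith⟩,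
          fun ⟨h₁, h₂⟩ => ⟨hu, by linarith, by linarith⟩⟩
      · ring
    · have : Prod.mk u ⁻¹' T = ∅ := eq_empty_of_forall_notMem fun v hv => hu hv.1
      simp [this]
  calc volume {y : EuclideanSpace ℝ (Fin (k + 3)) | y 0 ∈ Set.Icc lo hi ∧ ‖y‖ ^ 2 ∈ Set.Icc a b}
      = volume T := by
        rw [← he.measure_preimage_equiv]
        congr 1
        ext y
        simp [e, T, EuclideanSpace.real_norm_sq_eq, Fin.sum_univ_succ, Fin.tail]
    _ = ∫⁻ u, volume (Prod.mk u ⁻¹' T) := by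
        rw [Measure.volume_eq_prod, Measure.prod_apply hT]
    _ ≤ ENNReal.ofReal (K * (b - a)) * volume (Set.Icc lo hi) := by
        rw [← lintegral_indicator_const measurableSet_Icc]
        exact lintegral_mono hslice
    _ = ENNReal.ofReal (K * (b - a) * (hi - lo)) := by
        rw [Real.volume_Icc, ENNReal.ofReal_mul (mul_nonneg hK (sub_nonneg.2 hab))]

lemma exists_volume_annulus_inter_slab_le (k : ℕ) : ∃ K, 0 ≤ K ∧
    ∀ δ r lo hi : ℝ, 0 < δ → δ < 1 / 2 → r ∈ Set.Icc (1 / 2 : ℝ) 2 → lo ≤ hi →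
      volume (annulus (0 : EuclideanSpace ℝ (Fin (k + 3))) r δ ∩ {y | y 0 ∈ Set.Icc lo hi}) ≤
        ENNReal.ofReal (K * δ * (hi - lo)) := by
  obtain ⟨K, hK, hslab⟩ := exists_volume_slab_inter_norm_sq_mem_Icc_le k 3
  refine ⟨8 * K, by positivity, fun δ r lo hi hδ hδ₂ ⟨hr₁, hr₂⟩ hlohi => ?_⟩
  have hsub : annulus 0 r δ ∩ {y | y 0 ∈ Set.Icc lo hi} ⊆
      {y : EuclideanSpace ℝ (Fin (k + 3)) |
        y 0 ∈ Set.Icc lo hi ∧ ‖y‖ ^ 2 ∈ Set.Icc ((r - δ) ^ 2) ((r + δ) ^ 2)} :=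
    fun y hy => ⟨hy.2, by
      simpa only [dist_zero_right] using sq_dist_mem_Icc_of_mem_annulus (by linarith) hy.1⟩
  refine (measure_mono hsub).trans ((hslab _ _ _ _ (by nlinarith) (by nlinarith)).trans
    (ENNReal.ofReal_le_ofReal ?_))
  have hw : (r + δ) ^ 2 - (r - δ) ^ 2 ≤ 8 * δ := by nlinarith
  nlinarith [mul_le_mul_of_nonneg_left hw (mul_nonneg hK (sub_nonneg.2 hlohi))]

lemma exists_volume_annulus_inter_annulus_smul_single_le (k : ℕ) : ∃ K, 0 ≤ K ∧
    ∀ δ r s d : ℝ, 0 < δ → δ < 1 / 2 → r ∈ Set.Icc (1 / 2 : ℝ) 2 → s ∈ Set.Icc (1 / 2 : ℝ) 2 →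
      0 ≤ d → volume (annulus (0 : EuclideanSpace ℝ (Fin (k + 3))) r δ ∩
          annulus (d • EuclideanSpace.single 0 1) s δ) ≤ ENNReal.ofReal (K * δ ^ 2 / (d + δ)) := by
  obtain ⟨K, hK, hslab⟩ := exists_volume_annulus_inter_slab_le k
  refine ⟨16 * K, by positivity, fun δ r s d hδ hδ₂ hr hs hd => ?_⟩
  have ⟨hr₁, hr₂⟩ := hr
  have ⟨hs₁, hs₂⟩ := hs
  set X := annulus (0 : EuclideanSpace ℝ (Fin (k + 3))) r δ ∩
    annulus (d • EuclideanSpace.single 0 1) s δ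
  have hvol : ∀ lo hi : ℝ, lo ≤ hi → (∀ y ∈ X, y 0 ∈ Set.Icc lo hi) →
      volume X ≤ ENNReal.ofReal (K * δ * (hi - lo)) := fun lo hi hlohi hmem =>
    (measure_mono (subset_inter inter_subset_left hmem)).trans (hslab δ r lo hi hδ hδ₂ hr hlohi)
  rcases le_or_gt d δ with hdδ | hδd
  · refine (hvol (-3) 3 (by norm_num) fun y hy => ?_).trans (ENNReal.ofReal_le_ofReal ?_)
    · have h₁ := hy.1.2
      rw [dist_zero_right] at h₁
      have h₂ := abs_le.1 ((PiLp.norm_apply_le y 0).trans h₁)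
      exact ⟨by linarith, by linarith⟩
    · have hKδ : 0 ≤ K * δ := by positivity
      rw [le_div_iff₀ (by positivity)]
      nlinarith [mul_le_mul_of_nonneg_left (show d + δ ≤ 2 * δ by linarith) hKδ]
  · have hd₀ : 0 < d := hδ.trans hδd
    set c := r ^ 2 + d ^ 2 - s ^ 2
    refine (hvol ((c - 2 * δ * (r + s)) / (2 * d)) ((c + 2 * δ * (r + s)) / (2 * d)) ?_
      fun y hy => ?_).trans (ENNReal.ofReal_le_ofReal ?_)
    · gcongr; nlinarith
    · have h := abs_le.1 (abs_two_mul_inner_sub_le_of_mem_annulus_inter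
        (by simp) (by linarith) (by linarith) hy)
      simp only [EuclideanSpace.inner_single_right, one_mul, RCLike.conj_to_real] at h
      constructor
      · rw [div_le_iff₀ (by positivity)]; linarith
      · rw [le_div_iff₀ (by positivity)]; linarith
    · have hKδ : 0 ≤ K * δ ^ 2 := by positivity
      calc K * δ * ((c + 2 * δ * (r + s)) / (2 * d) - (c - 2 * δ * (r + s)) / (2 * d))
          = K * δ ^ 2 * (2 * (r + s)) / d := by field_simp; ring
        _ ≤ 16 * K * δ ^ 2 / (d + δ) := by
          rw [div_le_div_iff₀ hd₀ (by positivity)]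
          have hrs : 2 * (r + s) * (d + δ) ≤ 16 * d := by nlinarith
          nlinarith [mul_le_mul_of_nonneg_left hrs hKδ]

lemma exists_volume_annulus_inter_le (k : ℕ) : ∃ K, 0 ≤ K ∧
    ∀ δ r s : ℝ, 0 < δ → δ < 1 / 2 → r ∈ Set.Icc (1 / 2 : ℝ) 2 → s ∈ Set.Icc (1 / 2 : ℝ) 2 →
    ∀ p q : EuclideanSpace ℝ (Fin (k + 3)),
      volume (annulus p r δ ∩ annulus q s δ) ≤
        ENNReal.ofReal (K * δ ^ 2 / (dist (p, r) (q, s) + δ)) := by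
  obtain ⟨K, hK, hvol⟩ := exists_volume_annulus_inter_annulus_smul_single_le k
  refine ⟨3 * K, by positivity, fun δ r s hδ hδ₂ hr hs p q => ?_⟩
  by_cases hrs : |r - s| ≤ dist p q + 2 * δ
  · rw [volume_annulus_inter_eq_of_norm_eq (w := dist p q • EuclideanSpace.single 0 1)
      (by simp [norm_smul])]
    refine (hvol δ r s _ hδ hδ₂ hr hs dist_nonneg).trans (ENNReal.ofReal_le_ofReal ?_)
    have hmax : dist (p, r) (q, s) + δ ≤ 3 * (dist p q + δ) := by
      have hpq := dist_nonneg (x := p) (y := q)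
      have := max_le (show dist p q ≤ dist p q + 2 * δ by linarith) hrs
      rw [Prod.dist_eq, Real.dist_eq]
      linarith
    rw [div_le_div_iff₀ (by positivity) (by positivity)]
    have hKδ : 0 ≤ K * δ ^ 2 := by positivity
    nlinarith [mul_le_mul_of_nonneg_left hmax hKδ]
  · have hempty : annulus p r δ ∩ annulus q s δ = ∅ :=
      eq_empty_of_forall_notMem fun y hy => hrs (abs_sub_le_dist_add_of_mem_annulus_inter hy)
    simp [hempty]

lemma exists_sum_volume_annulus_inter_le {ι : Type*} (n : ℕ) (hn : 3 ≤ n) : ∃ K, 0 ≤ K ∧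
    ∀ δ A : ℝ, 0 < δ → δ < 1 / 2 → 0 ≤ A →
    ∀ (I : Finset ι) (x : ι → EuclideanSpace ℝ (Fin n)) (t : ι → ℝ),
      (∀ i ∈ I, t i ∈ Set.Icc (1 / 2 : ℝ) 2) →
      (∀ (z : EuclideanSpace ℝ (Fin n) × ℝ) (ρ : ℝ), δ ≤ ρ →
        ((I.filter fun i => dist (x i, t i) z ≤ ρ).card : ℝ) ≤ A * ρ) →
      ∀ i ∈ I, ∑ j ∈ I, volume (annulus (x i) (t i) δ ∩ annulus (x j) (t j) δ) ≤
        ENNReal.ofReal (K * δ ^ 2 * A * Real.log (1 / δ)) := by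
  obtain ⟨k, rfl⟩ : ∃ k, n = k + 3 := ⟨n - 3, by omega⟩
  obtain ⟨K, hK, hvol⟩ := exists_volume_annulus_inter_le k
  obtain ⟨c, hc, hlog⟩ := exists_two_pow_mul_ge_and_le_log (M := 10) (by norm_num)
  refine ⟨2 * K * c, by positivity, fun δ A hδ hδ₂ hA I x t ht hcount i hi => ?_⟩
  obtain ⟨N, hN, hNL⟩ := hlog δ hδ hδ₂
  set D : ι → ℝ := fun j => dist (x j, t j) (x i, t i)
  set J := I.filter fun j => D j ≤ 2 ^ N * δ
  -- `Sⱼ^δ` can meet `Sᵢ^δ` only if `D j ≤ 5 ≤ 2 ^ N * δ`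
  have hJ : ∑ j ∈ J, volume (annulus (x i) (t i) δ ∩ annulus (x j) (t j) δ) =
      ∑ j ∈ I, volume (annulus (x i) (t i) δ ∩ annulus (x j) (t j) δ) := by
    refine sum_filter_of_ne fun j hj hne => ?_
    obtain ⟨y, hy⟩ := nonempty_of_measure_ne_zero hne
    obtain ⟨hti₁, hti₂⟩ := ht i hi
    obtain ⟨htj₁, htj₂⟩ := ht j hj
    have hDj : D j ≤ t i + t j + 2 * δ :=
      (dist_comm _ _).trans_le (dist_prod_le_of_mem_annulus_inter (by linarith) (by linarith) hy)
    linarith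
  have hsum : ∑ j ∈ J, 1 / (D j + δ) ≤ 2 * A * (N + 1) :=
    sum_one_div_add_le_of_card_le hδ J D N (fun j hj => ⟨dist_nonneg, (mem_filter.1 hj).2⟩)
      fun ρ hρ => le_trans (by gcongr; exact filter_subset _ _) (hcount (x i, t i) ρ hρ)
  rw [← hJ]
  calc ∑ j ∈ J, volume (annulus (x i) (t i) δ ∩ annulus (x j) (t j) δ)
      ≤ ∑ j ∈ J, ENNReal.ofReal (K * δ ^ 2 * (1 / (D j + δ))) := by
        refine sum_le_sum fun j hj => ?_
        have hj' := (mem_filter.1 hj).1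
        have := hvol δ _ _ hδ hδ₂ (ht i hi) (ht j hj') (x i) (x j)
        rw [mul_one_div]
        rwa [dist_comm] at this
    _ = ENNReal.ofReal (K * δ ^ 2 * ∑ j ∈ J, 1 / (D j + δ)) := by
        rw [mul_sum, ENNReal.ofReal_sum_of_nonneg fun j _ => by positivity]
    _ ≤ ENNReal.ofReal (2 * K * c * δ ^ 2 * A * Real.log (1 / δ)) := by
        refine ENNReal.ofReal_le_ofReal ?_
        calc K * δ ^ 2 * ∑ j ∈ J, 1 / (D j + δ) ≤ K * δ ^ 2 * (2 * A * (N + 1)) := by gcongr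
          _ ≤ K * δ ^ 2 * (2 * A * (c * Real.log (1 / δ))) := by gcongr
          _ = _ := by ring

/-- Let `n ≥ 3`. There is `C = C(n)` such that: for every
`0 < δ < 1/2` and `A > 0`, and every finite collection of spheres `S_i = S(x_i,t_i)`
in `ℝⁿ` with radii `t_i ∈ [1/2, 2]` satisfying the non-concentration condition
`#{i : (x_i, t_i) ∈ B_ρ} ≤ A ρ` for every ball `B_ρ ⊆ ℝⁿ × ℝ` of radius `ρ ≥ δ`,
and for all nonnegative coefficients `a_i`,
`‖Σ_i a_i 1_{S_i^δ}‖_{L²(ℝⁿ)} ≤ C δ log(1/δ) A^{1/2} (Σ_i a_i²)^{1/2}`. -/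
theorem stmt17 (n : ℕ) (hn : 3 ≤ n) :
    ∃ C : ℝ, 0 < C ∧
      ∀ (δ A : ℝ), 0 < δ → δ < 1/2 → 0 < A →
      ∀ (I : Finset ℕ) (x : ℕ → EuclideanSpace ℝ (Fin n)) (t : ℕ → ℝ),
        (∀ i ∈ I, t i ∈ Set.Icc (1/2 : ℝ) 2) →
        (∀ (z : EuclideanSpace ℝ (Fin n) × ℝ) (ρ : ℝ), δ ≤ ρ →
          ((I.filter (fun i => dist (x i, t i) z ≤ ρ)).card : ℝ) ≤ A * ρ) →
      ∀ (a : ℕ → ℝ), (∀ i, 0 ≤ a i) →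
        eLpNorm
          (fun w => ∑ i ∈ I, a i *
            ({y : EuclideanSpace ℝ (Fin n) |
                t i - δ ≤ dist y (x i) ∧ dist y (x i) ≤ t i + δ}.indicator
              (fun _ => (1 : ℝ)) w)) 2 volume ≤
        ENNReal.ofReal (C * δ * Real.log (1 / δ) * Real.sqrt A *
          Real.sqrt (∑ i ∈ I, (a i) ^ 2)) := by
  obtain ⟨K, hK, hsum⟩ := exists_sum_volume_annulus_inter_le (ι := ℕ) n hn
  have hl2 : 0 < Real.log 2 := Real.log_pos one_lt_two
  set C := √(K / Real.log 2) + 1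
  refine ⟨C, by positivity, fun δ A hδ hδ₂ hA I x t ht hcount a _ => ?_⟩
  set L := Real.log (1 / δ)
  have hL : Real.log 2 ≤ L := Real.log_le_log two_pos (by rw [le_div_iff₀ hδ]; linarith)
  have hL₀ : 0 < L := hl2.trans_le hL
  have hKC : K ≤ C ^ 2 * L := by
    have h := Real.sq_sqrt (div_nonneg hK hl2.le)
    rw [eq_div_iff hl2.ne'] at h
    nlinarith [Real.sqrt_nonneg (K / Real.log 2)]
  refine (eLpNorm_sum_mul_indicator_le_of_sum_measure_inter_le volume I
    (E := fun i => annulus (x i) (t i) δ) (fun i => measurableSet_annulus _ _ _) a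
    (W := K * δ ^ 2 * A * L) (by positivity) fun i hi =>
      hsum δ A hδ hδ₂ hA.le I x t ht hcount i hi).trans (ENNReal.ofReal_le_ofReal ?_)
  gcongr
  calc √(K * δ ^ 2 * A * L) ≤ √((C * δ * L) ^ 2 * A) := by
        refine Real.sqrt_le_sqrt ?_
        nlinarith [mul_le_mul_of_nonneg_right hKC (by positivity : 0 ≤ δ ^ 2 * A * L)]
    _ = C * δ * L * √A := by rw [Real.sqrt_mul (sq_nonneg _), Real.sqrt_sq (by positivity)]
end
end

section
/- Let n ≥ 4 and 0 < δ < 1/2. Let E = {(0,0)} × (1/√2)S^{n−3} ⊂ ℝ² × ℝ^{n−2} and Z = (1/√2)S¹ × {0}^{n−2}. Then for every z ∈ Z, the intersection E^δ ∩ S^δ(z) has Lebesgue measure at least c(n)|E^δ|, where S^δ(z) is the δ-annulus of the unit sphere centered at z, E^δ is the δ-neighborhood of E, and c(n) > 0 depends only on n. Consequently ‖N^δ‖_{L^p→L^p} ≥ c δ^{2 − 3/p} for all 1 ≤ p ≤ ∞. -/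
/-!
A point of `E` and a point of `Z` lie in orthogonal coordinate planes and both have norm `1/√2`,
so they are at distance exactly `1`: all of `E` lies on every unit sphere centred on `Z`, hence
`E^δ ⊆ S^δ(z)` for every `z ∈ Z`.

For the maximal function, test `f = 1_{E^δ}`. Every `x` in the ball `B(e₀, 1/2)` is at distance `1`
from some `z ∈ Z` (intermediate value theorem along the circle `Z`), and the direction `u = z - x`
gives `N^δ f(x) ≥ |E^δ| / |S^δ(0)|`. Since `E^δ` contains `[-δ/2, δ/2]²` times a shell of width
`δ/2` below the sphere `(1/√2)S^{n-3}`, `|E^δ| ≳ δ³`, while `|S^δ(0)| ≲ δ`; therefore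
`‖N^δ f‖_p / ‖f‖_p ≳ |E^δ|^{1-1/p} / δ ≳ δ^{2-3/p}`.
-/

open MeasureTheory Metric Set
open scoped ENNReal NNReal

noncomputable section

/-- The `δ`-annulus of the unit sphere centered at `c` in `ℝⁿ`. -/
def unitAnnulus (n : ℕ) (c : EuclideanSpace ℝ (Fin n)) (δ : ℝ) :
    Set (EuclideanSpace ℝ (Fin n)) :=
  {y | 1 - δ ≤ dist y c ∧ dist y c ≤ 1 + δ}

/-- The Nikodym maximal function associated with unit spheres. -/
def nikMax (n : ℕ) (δ : ℝ) (f : EuclideanSpace ℝ (Fin n) → ℝ)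
    (x : EuclideanSpace ℝ (Fin n)) : ℝ :=
  ⨆ u ∈ sphere (0 : EuclideanSpace ℝ (Fin n)) 1,
    ((volume (unitAnnulus n 0 δ)).toReal)⁻¹ *
      |∫ y in unitAnnulus n 0 δ, f (x + u + y)|

/-- The Lenz-type test set `E = {(0,0)} × (1/√2) S^{n−3}`: points of `ℝⁿ` with
first two coordinates zero lying on the sphere of radius `1/√2`. -/
def lenzSet (n : ℕ) (hn : 4 ≤ n) : Set (EuclideanSpace ℝ (Fin n)) :=
  {x | x ⟨0, by omega⟩ = 0 ∧ x ⟨1, by omega⟩ = 0 ∧ ‖x‖ = (Real.sqrt 2)⁻¹}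

section Real

theorem sub_mul_pow_le_pow_sub_pow {a b : ℝ} (hb : 0 ≤ b) (hab : b ≤ a) (k : ℕ) :
    (a - b) * a ^ k ≤ a ^ (k + 1) - b ^ (k + 1) := by
  have := pow_le_pow_left₀ hb hab k
  rw [pow_succ, pow_succ]
  nlinarith

theorem inv_sqrt_two_sq : (Real.sqrt 2)⁻¹ ^ 2 = 1 / 2 := by
  rw [inv_pow, Real.sq_sqrt zero_le_two, one_div]

theorem half_lt_inv_sqrt_two : 1 / 2 < (Real.sqrt 2)⁻¹ := by
  rw [one_div, inv_lt_inv₀ (by norm_num) (by positivity), Real.sqrt_lt' two_pos]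
  norm_num

theorem min_le_rpow {a e : ℝ} (ha : 0 < a) (he₀ : 0 ≤ e) (he₁ : e ≤ 1) : min a 1 ≤ a ^ e := by
  rcases le_total a 1 with h | h
  · calc min a 1 ≤ a ^ (1 : ℝ) := by rw [Real.rpow_one]; exact min_le_left _ _
      _ ≤ a ^ e := Real.rpow_le_rpow_of_exponent_ge ha h he₁
  · calc min a 1 ≤ a ^ (0 : ℝ) := by rw [Real.rpow_zero]; exact min_le_right _ _
      _ ≤ a ^ e := Real.rpow_le_rpow_of_exponent_le h he₀

theorem mul_rpow_le_div_mul_rpow {c c₁ K W V A δ s : ℝ} (hc₁ : 0 < c₁) (hW : 0 < W) (hA : 0 < A)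
    (hδ : 0 < δ) (hV : c₁ * δ ^ 3 ≤ V) (hAK : A ≤ K * δ) (hs₀ : 0 ≤ s) (hs₁ : s ≤ 1)
    (hc : c ≤ min c₁ 1 * min W 1 / K) :
    c * δ ^ (2 - 3 * s) * V ^ s ≤ V / A * W ^ s := by
  have hV₀ : 0 < V := lt_of_lt_of_le (by positivity) hV
  have hK : 0 < K := pos_of_mul_pos_left (hA.trans_le hAK) hδ.le
  have hVs : min c₁ 1 * δ ^ (3 - 3 * s) ≤ V ^ (1 - s) :=
    calc min c₁ 1 * δ ^ (3 - 3 * s)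
        ≤ c₁ ^ (1 - s) * (δ ^ 3) ^ (1 - s) := by
          rw [← Real.rpow_natCast, ← Real.rpow_mul hδ.le]
          push_cast
          rw [show (3 : ℝ) * (1 - s) = 3 - 3 * s by ring]
          gcongr
          exact min_le_rpow hc₁ (by linarith) (by linarith)
      _ = (c₁ * δ ^ 3) ^ (1 - s) := (Real.mul_rpow hc₁.le (by positivity)).symm
      _ ≤ V ^ (1 - s) := Real.rpow_le_rpow (by positivity) hV (by linarith)
  calc c * δ ^ (2 - 3 * s) * V ^ s
      ≤ min c₁ 1 * min W 1 / K * δ ^ (2 - 3 * s) * V ^ s := by gcongr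
    _ = V ^ s * (min c₁ 1 * δ ^ (3 - 3 * s)) / (K * δ) * min W 1 := by
      rw [show 3 - 3 * s = 2 - 3 * s + 1 by ring, Real.rpow_add hδ, Real.rpow_one]
      field_simp
    _ ≤ V ^ s * V ^ (1 - s) / A * W ^ s := by
      gcongr
      exact min_le_rpow hW hs₀ hs₁
    _ = V / A * W ^ s := by rw [← Real.rpow_add hV₀, add_sub_cancel, Real.rpow_one]

end Real

section Lp

variable {α : Type*} [MeasurableSpace α] {μ : Measure α} {s : Set α} {p : ℝ≥0∞} {a : ℝ}

theorem eLpNorm_indicator_const_eq_ofReal (ha : 0 ≤ a) (hs : MeasurableSet s) (hμs : μ s ≠ 0)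
    (hμs' : μ s ≠ ∞) (hp : p ≠ 0) :
    eLpNorm (s.indicator fun _ => a) p μ = ENNReal.ofReal (a * μ.real s ^ (1 / p.toReal)) := by
  rw [eLpNorm_indicator_const' hs hμs hp, Real.enorm_eq_ofReal ha, measureReal_def,
    ENNReal.ofReal_mul ha, ← ENNReal.ofReal_rpow_of_nonneg ENNReal.toReal_nonneg (by positivity),
    ENNReal.ofReal_toReal hμs']

theorem ofReal_mul_rpow_le_eLpNorm {g : α → ℝ} (ha : 0 ≤ a) (hs : MeasurableSet s)
    (hμs : μ s ≠ 0) (hμs' : μ s ≠ ∞) (hp : p ≠ 0) (hg : ∀ x ∈ s, a ≤ ‖g x‖) :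
    ENNReal.ofReal (a * μ.real s ^ (1 / p.toReal)) ≤ eLpNorm g p μ := by
  rw [← eLpNorm_indicator_const_eq_ofReal ha hs hμs hμs' hp]
  refine eLpNorm_mono fun x => ?_
  by_cases hx : x ∈ s
  · rw [indicator_of_mem hx, Real.norm_of_nonneg ha]
    exact hg x hx
  · rw [indicator_of_notMem hx, norm_zero]
    exact norm_nonneg _

theorem one_div_toReal_le_one (hp : 1 ≤ p) : 1 / p.toReal ≤ 1 := by
  rw [one_div, ← ENNReal.toReal_inv]
  exact ENNReal.toReal_le_of_le_ofReal zero_le_one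
    (by rw [ENNReal.ofReal_one]; exact ENNReal.inv_le_one.2 hp)

end Lp

theorem measureReal_ball_pos {α : Type*} [PseudoMetricSpace α] [ProperSpace α] [MeasurableSpace α]
    (μ : Measure α) [μ.IsOpenPosMeasure] [IsFiniteMeasureOnCompacts μ] (x : α) {r : ℝ}
    (hr : 0 < r) : 0 < μ.real (ball x r) :=
  ENNReal.toReal_pos (measure_ball_pos μ x hr).ne' measure_ball_lt_top.ne

theorem addHaar_closedBall_diff_ball {E : Type*} [NormedAddCommGroup E] [NormedSpace ℝ E]
    [MeasurableSpace E] [BorelSpace E] [FiniteDimensional ℝ E] (μ : Measure E)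
    [μ.IsAddHaarMeasure] (x : E) {r₁ r₂ : ℝ} (h₁ : 0 < r₁) (h₁₂ : r₁ ≤ r₂) :
    μ (closedBall x r₂ \ ball x r₁) =
      ENNReal.ofReal (r₂ ^ Module.finrank ℝ E - r₁ ^ Module.finrank ℝ E) * μ (ball 0 1) := by
  rw [measure_sdiff (ball_subset_closedBall.trans (closedBall_subset_closedBall h₁₂))
      measurableSet_ball.nullMeasurableSet measure_ball_lt_top.ne,
    Measure.addHaar_closedBall μ x (h₁.le.trans h₁₂), Measure.addHaar_ball_of_pos μ x h₁,
    ← ENNReal.sub_mul (fun _ _ => measure_ball_lt_top.ne),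
    ENNReal.ofReal_sub _ (by positivity)]

section Annulus

variable {n : ℕ} {δ : ℝ}

theorem unitAnnulus_eq_closedBall_diff_ball (z : EuclideanSpace ℝ (Fin n)) (δ : ℝ) :
    unitAnnulus n z δ = closedBall z (1 + δ) \ ball z (1 - δ) := by
  ext y
  simp [unitAnnulus, and_comm]

theorem volume_unitAnnulus_lt_top (z : EuclideanSpace ℝ (Fin n)) (δ : ℝ) :
    volume (unitAnnulus n z δ) < ∞ := by
  rw [unitAnnulus_eq_closedBall_diff_ball]
  exact (measure_mono sdiff_subset).trans_lt measure_closedBall_lt_top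

theorem volume_unitAnnulus_zero (hδ₀ : 0 ≤ δ) (hδ₁ : δ < 1) :
    volume (unitAnnulus n 0 δ) =
      ENNReal.ofReal ((1 + δ) ^ n - (1 - δ) ^ n) *
        volume (ball (0 : EuclideanSpace ℝ (Fin n)) 1) := by
  rw [unitAnnulus_eq_closedBall_diff_ball,
    addHaar_closedBall_diff_ball _ _ (by linarith) (by linarith), finrank_euclideanSpace_fin]

theorem measureReal_unitAnnulus_zero_pos (hn : n ≠ 0) (hδ₀ : 0 < δ) (hδ₁ : δ < 1) :
    0 < volume.real (unitAnnulus n 0 δ) := by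
  have : (1 - δ) ^ n < (1 + δ) ^ n := pow_lt_pow_left₀ (by linarith) (by linarith) hn
  rw [measureReal_def, volume_unitAnnulus_zero hδ₀.le hδ₁, ENNReal.toReal_mul,
    ENNReal.toReal_ofReal (by linarith)]
  exact mul_pos (by linarith) (measureReal_ball_pos _ _ one_pos)

theorem measureReal_unitAnnulus_zero_le (hδ₀ : 0 ≤ δ) (hδ₁ : δ < 1) :
    volume.real (unitAnnulus n 0 δ) ≤
      2 * n * 2 ^ n * volume.real (ball (0 : EuclideanSpace ℝ (Fin n)) 1) * δ := by
  have hmono : (1 - δ) ^ n ≤ (1 + δ) ^ n := pow_le_pow_left₀ (by linarith) (by linarith) n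
  have hsub : (1 + δ) ^ n - (1 - δ) ^ n ≤ 2 * n * 2 ^ n * δ := by
    have h := abs_pow_sub_pow_le (1 + δ) (1 - δ) n
    rw [abs_of_nonneg (sub_nonneg.2 hmono), show (1 + δ) - (1 - δ) = 2 * δ by ring,
      abs_of_nonneg (by linarith), abs_of_nonneg (by linarith : (0 : ℝ) ≤ 1 + δ),
      max_eq_left (by rw [abs_le]; constructor <;> linarith)] at h
    have h2 : (1 + δ) ^ (n - 1) ≤ 2 ^ n :=
      (pow_le_pow_left₀ (by linarith) (by linarith : 1 + δ ≤ 2) _).trans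
        (pow_le_pow_right₀ one_le_two (Nat.sub_le n 1))
    calc (1 + δ) ^ n - (1 - δ) ^ n ≤ 2 * δ * n * (1 + δ) ^ (n - 1) := h
      _ ≤ 2 * δ * n * 2 ^ n := by gcongr
      _ = _ := by ring
  rw [measureReal_def, volume_unitAnnulus_zero hδ₀ hδ₁, ENNReal.toReal_mul, ← measureReal_def,
    ENNReal.toReal_ofReal (sub_nonneg.2 hmono)]
  have := measureReal_nonneg (μ := volume) (s := ball (0 : EuclideanSpace ℝ (Fin n)) 1)
  nlinarith

theorem cthickening_subset_unitAnnulus {s : Set (EuclideanSpace ℝ (Fin n))}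
    {z : EuclideanSpace ℝ (Fin n)} (hs : s ⊆ sphere z 1) (hδ : 0 ≤ δ) :
    cthickening δ s ⊆ unitAnnulus n z δ := by
  refine (cthickening_subset_of_subset δ hs).trans ?_
  rw [(isCompact_sphere z 1).cthickening_eq_biUnion_closedBall hδ]
  simp only [iUnion_subset_iff]
  intro y hy x hx
  rw [mem_sphere] at hy
  rw [mem_closedBall] at hx
  have h₁ := dist_triangle x y z
  have h₂ := dist_triangle_left y z x
  exact ⟨by linarith, by linarith⟩

theorem add_mem_unitAnnulus_iff {z y : EuclideanSpace ℝ (Fin n)} :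
    z + y ∈ unitAnnulus n z δ ↔ y ∈ unitAnnulus n 0 δ := by
  simp [unitAnnulus, dist_eq_norm]

end Annulus

section Nikodym

variable {n : ℕ} {δ : ℝ}

theorem nikMax_nonneg (f : EuclideanSpace ℝ (Fin n) → ℝ) (x : EuclideanSpace ℝ (Fin n)) :
    0 ≤ nikMax n δ f x :=
  Real.iSup_nonneg fun _ => Real.iSup_nonneg fun _ => by positivity

theorem setIntegral_unitAnnulus_indicator_add {F : Set (EuclideanSpace ℝ (Fin n))}
    (hF : MeasurableSet F) {z : EuclideanSpace ℝ (Fin n)} (hFz : F ⊆ unitAnnulus n z δ) :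
    ∫ y in unitAnnulus n 0 δ, F.indicator (fun _ => (1 : ℝ)) (z + y) = volume.real F := by
  have hpre : (z + ·) ⁻¹' F ⊆ unitAnnulus n 0 δ := fun y hy =>
    add_mem_unitAnnulus_iff.1 (hFz hy)
  calc ∫ y in unitAnnulus n 0 δ, F.indicator (fun _ => (1 : ℝ)) (z + y)
      = ∫ y in unitAnnulus n 0 δ, ((z + ·) ⁻¹' F).indicator (fun _ => (1 : ℝ)) y := rfl
    _ = ∫ _ in unitAnnulus n 0 δ ∩ (z + ·) ⁻¹' F, (1 : ℝ) :=
      setIntegral_indicator (hF.preimage (measurable_const_add z))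
    _ = volume.real F := by
      rw [inter_eq_right.2 hpre, setIntegral_const, smul_eq_mul, mul_one, measureReal_def,
        measure_preimage_add, measureReal_def]

theorem le_nikMax_indicator {F : Set (EuclideanSpace ℝ (Fin n))} (hF : MeasurableSet F)
    {x z : EuclideanSpace ℝ (Fin n)} (hFz : F ⊆ unitAnnulus n z δ) (hxz : dist x z = 1) :
    (volume.real (unitAnnulus n 0 δ))⁻¹ * volume.real F ≤
      nikMax n δ (F.indicator fun _ => 1) x := by
  set A := volume.real (unitAnnulus n 0 δ)
  set g := fun u => A⁻¹ * |∫ y in unitAnnulus n 0 δ, F.indicator (fun _ => (1 : ℝ)) (x + u + y)|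
  have hg (u : EuclideanSpace ℝ (Fin n)) : g u ≤ A⁻¹ * A := by
    have h := norm_setIntegral_le_of_norm_le_const (volume_unitAnnulus_lt_top 0 δ) (C := 1)
      fun y _ => (norm_indicator_le_norm_self (s := F) (fun _ => (1 : ℝ)) (x + u + y)).trans
        norm_one.le
    rw [one_mul, Real.norm_eq_abs] at h
    exact mul_le_mul_of_nonneg_left h (by positivity)
  have hu : z - x ∈ sphere (0 : EuclideanSpace ℝ (Fin n)) 1 := by
    rwa [mem_sphere_zero_iff_norm, ← dist_eq_norm, dist_comm]
  have hbdd : BddAbove (range fun u => ⨆ _ : u ∈ sphere (0 : EuclideanSpace ℝ (Fin n)) 1, g u) :=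
    ⟨A⁻¹ * A, forall_mem_range.2 fun u => Real.iSup_le (fun _ => hg u) (by positivity)⟩
  refine le_ciSup_of_le hbdd (z - x) ?_
  rw [ciSup_pos hu]
  simp only [add_sub_cancel, setIntegral_unitAnnulus_indicator_add hF hFz,
    abs_of_nonneg measureReal_nonneg]
  exact le_rfl

end Nikodym

section Lenz

-- Throughout, `n = m + 2` and `x ↦ (x 0, x 1, tailTwo x)` splits `ℝⁿ = ℝ × ℝ × ℝ^{n-2}`.
variable {m : ℕ}

def tailTwo (x : EuclideanSpace ℝ (Fin (m + 2))) : EuclideanSpace ℝ (Fin m) :=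
  WithLp.toLp 2 fun j => x j.succ.succ

theorem measurePreserving_headTwo_tailTwo :
    MeasurePreserving (fun x : EuclideanSpace ℝ (Fin (m + 2)) => (x 0, x 1, tailTwo x)) := by
  have h := (((MeasurePreserving.id volume).prod
      ((MeasurePreserving.id volume).prod (PiLp.volume_preserving_toLp (Fin m)))).comp
    ((MeasurePreserving.id volume).prod
      (volume_preserving_piFinSuccAbove (fun _ : Fin (m + 1) => ℝ) 0))).comp
    ((volume_preserving_piFinSuccAbove (fun _ : Fin (m + 2) => ℝ) 0).comp
      (PiLp.volume_preserving_ofLp (Fin (m + 2))))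
  convert h using 1
  · ext x <;> simp [tailTwo, Fin.tail]
  · rfl

theorem volume_headTwo_tailTwo_preimage {s t : Set ℝ} {u : Set (EuclideanSpace ℝ (Fin m))}
    (hs : MeasurableSet s) (ht : MeasurableSet t) (hu : MeasurableSet u) :
    volume {x : EuclideanSpace ℝ (Fin (m + 2)) | x 0 ∈ s ∧ x 1 ∈ t ∧ tailTwo x ∈ u} =
      volume s * volume t * volume u := by
  rw [mul_assoc, ← Measure.prod_prod, ← Measure.prod_prod]
  exact measurePreserving_headTwo_tailTwo.measure_preimage
    (hs.prod (ht.prod hu)).nullMeasurableSet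

theorem dist_sq_eq_headTwo_tailTwo (x y : EuclideanSpace ℝ (Fin (m + 2))) :
    dist x y ^ 2 = (x 0 - y 0) ^ 2 + (x 1 - y 1) ^ 2 + dist (tailTwo x) (tailTwo y) ^ 2 := by
  simp only [EuclideanSpace.dist_eq, Real.dist_eq, sq_abs]
  rw [Real.sq_sqrt (by positivity), Real.sq_sqrt (by positivity), Fin.sum_univ_succ,
    Fin.sum_univ_succ, Fin.succ_zero_eq_one, ← add_assoc]
  rfl

theorem tailTwo_zero : tailTwo (0 : EuclideanSpace ℝ (Fin (m + 2))) = 0 := rfl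

theorem norm_sq_eq_headTwo_tailTwo (x : EuclideanSpace ℝ (Fin (m + 2))) :
    ‖x‖ ^ 2 = x 0 ^ 2 + x 1 ^ 2 + ‖tailTwo x‖ ^ 2 := by
  simpa [tailTwo_zero] using dist_sq_eq_headTwo_tailTwo x 0

theorem tailTwo_eq_zero_iff {z : EuclideanSpace ℝ (Fin (m + 2))} :
    tailTwo z = 0 ↔ ∀ i : Fin (m + 2), 2 ≤ (i : ℕ) → z i = 0 := by
  refine ⟨fun h i hi => ?_, fun h => ?_⟩
  · obtain ⟨j, rfl⟩ : ∃ j : Fin m, j.succ.succ = i := ⟨⟨i - 2, by omega⟩, by ext; simp; omega⟩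
    exact congrArg (· j) h
  · ext j
    exact h _ (by simp)

theorem mem_lenzSet_iff (hn : 4 ≤ m + 2) {x : EuclideanSpace ℝ (Fin (m + 2))} :
    x ∈ lenzSet (m + 2) hn ↔ x 0 = 0 ∧ x 1 = 0 ∧ ‖x‖ = (Real.sqrt 2)⁻¹ := by
  simp [lenzSet]

theorem lenzSet_subset_sphere (hn : 4 ≤ m + 2) {z : EuclideanSpace ℝ (Fin (m + 2))}
    (hz : ‖z‖ = (Real.sqrt 2)⁻¹) (hzt : tailTwo z = 0) :
    lenzSet (m + 2) hn ⊆ sphere z 1 := by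
  intro e he
  rw [mem_lenzSet_iff] at he
  obtain ⟨he₀, he₁, he⟩ := he
  have hd := dist_sq_eq_headTwo_tailTwo e z
  have hne := norm_sq_eq_headTwo_tailTwo e
  have hnz := norm_sq_eq_headTwo_tailTwo z
  rw [hzt, dist_zero_right] at hd
  rw [hzt, norm_zero] at hnz
  rw [he, he₀, he₁, inv_sqrt_two_sq] at hne
  rw [hz, inv_sqrt_two_sq] at hnz
  rw [mem_sphere, ← pow_eq_one_iff_of_nonneg dist_nonneg two_ne_zero, hd, he₀, he₁]
  linarith

theorem mem_cthickening_lenzSet (hn : 4 ≤ m + 2) {δ : ℝ} (hδ : δ ≤ 1)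
    {x : EuclideanSpace ℝ (Fin (m + 2))} (h₀ : |x 0| ≤ δ / 2) (h₁ : |x 1| ≤ δ / 2)
    (ht : ‖tailTwo x‖ ∈ Icc ((Real.sqrt 2)⁻¹ - δ / 2) (Real.sqrt 2)⁻¹) :
    x ∈ cthickening δ (lenzSet (m + 2) hn) := by
  set w := tailTwo x
  have hw : 0 < ‖w‖ := by linarith [ht.1, half_lt_inv_sqrt_two]
  -- the radial projection of `(0, 0, w)` onto `E`
  set e : EuclideanSpace ℝ (Fin (m + 2)) :=
    WithLp.toLp 2 (Fin.cons 0 (Fin.cons 0 (((Real.sqrt 2)⁻¹ / ‖w‖) • w)))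
  have he₀ : e 0 = 0 := rfl
  have he₁ : e 1 = 0 := rfl
  have het : tailTwo e = ((Real.sqrt 2)⁻¹ / ‖w‖) • w := rfl
  have hδ₀ : 0 ≤ δ := by linarith [ht.1, ht.2]
  refine mem_cthickening_of_dist_le x e δ _ ?_ ?_
  · rw [mem_lenzSet_iff]
    refine ⟨he₀, he₁, ?_⟩
    rw [← pow_left_inj₀ (norm_nonneg _) (by positivity) two_ne_zero, norm_sq_eq_headTwo_tailTwo,
      he₀, he₁, het, norm_smul, Real.norm_eq_abs, abs_of_nonneg (by positivity),
      div_mul_cancel₀ _ hw.ne']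
    ring
  · have hwe : dist w (((Real.sqrt 2)⁻¹ / ‖w‖) • w) = |‖w‖ - (Real.sqrt 2)⁻¹| := by
      rw [dist_eq_norm, show w - ((Real.sqrt 2)⁻¹ / ‖w‖) • w = (1 - (Real.sqrt 2)⁻¹ / ‖w‖) • w by
        rw [sub_smul, one_smul], norm_smul, Real.norm_eq_abs, ← abs_of_pos hw, ← abs_mul,
        abs_of_pos hw, sub_mul, div_mul_cancel₀ _ hw.ne', one_mul]
    rw [← pow_le_pow_iff_left₀ dist_nonneg hδ₀ two_ne_zero, dist_sq_eq_headTwo_tailTwo, he₀, he₁,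
      het, hwe, sub_zero, sub_zero, ← sq_abs (x 0), ← sq_abs (x 1), sq_abs (‖w‖ - _)]
    have := abs_nonneg (x 0)
    have := abs_nonneg (x 1)
    nlinarith [ht.1, ht.2]

theorem volume_cthickening_lenzSet_lt_top {n : ℕ} (hn : 4 ≤ n) (δ : ℝ) :
    volume (cthickening δ (lenzSet n hn)) < ∞ :=
  (isBounded_sphere.subset fun _ hx => mem_sphere_zero_iff_norm.2 hx.2.2).cthickening.measure_lt_top

theorem measureReal_cthickening_lenzSet_ge (hn : 4 ≤ m + 2) {δ : ℝ} (hδ₀ : 0 < δ) (hδ₁ : δ ≤ 1) :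
    (Real.sqrt 2)⁻¹ ^ (m - 1) / 2 * volume.real (ball (0 : EuclideanSpace ℝ (Fin m)) 1) * δ ^ 3 ≤
      volume.real (cthickening δ (lenzSet (m + 2) hn)) := by
  set r := (Real.sqrt 2)⁻¹
  have hr := half_lt_inv_sqrt_two
  let T := {x : EuclideanSpace ℝ (Fin (m + 2)) | x 0 ∈ Icc (-(δ / 2)) (δ / 2) ∧
    x 1 ∈ Icc (-(δ / 2)) (δ / 2) ∧ tailTwo x ∈ closedBall 0 r \ ball 0 (r - δ / 2)}
  have hT : T ⊆ cthickening δ (lenzSet (m + 2) hn) := by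
    rintro x ⟨h₀, h₁, ht₁, ht₂⟩
    rw [mem_closedBall_zero_iff] at ht₁
    rw [mem_ball_zero_iff, not_lt] at ht₂
    exact mem_cthickening_lenzSet hn hδ₁ (abs_le.2 h₀) (abs_le.2 h₁) ⟨ht₂, ht₁⟩
  have hshell : 0 ≤ r ^ m - (r - δ / 2) ^ m :=
    sub_nonneg.2 (pow_le_pow_left₀ (by linarith) (by linarith) m)
  have hvolT : volume.real T = δ * δ * (r ^ m - (r - δ / 2) ^ m) *
      volume.real (ball (0 : EuclideanSpace ℝ (Fin m)) 1) := by
    rw [measureReal_def, volume_headTwo_tailTwo_preimage measurableSet_Icc measurableSet_Icc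
      (measurableSet_closedBall.diff measurableSet_ball), Real.volume_Icc,
      addHaar_closedBall_diff_ball _ _ (by linarith) (by linarith), finrank_euclideanSpace_fin,
      show δ / 2 - -(δ / 2) = δ by ring]
    simp only [ENNReal.toReal_mul, ENNReal.toReal_ofReal hδ₀.le, ENNReal.toReal_ofReal hshell,
      measureReal_def, mul_assoc]
  obtain ⟨k, rfl⟩ : ∃ k, m = k + 1 := ⟨m - 1, by omega⟩
  have hpow := sub_mul_pow_le_pow_sub_pow (by linarith : 0 ≤ r - δ / 2)
    (by linarith : r - δ / 2 ≤ r) k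
  refine le_trans ?_ (hvolT.symm.trans_le
    (measureReal_mono hT (volume_cthickening_lenzSet_lt_top hn δ).ne))
  rw [Nat.add_sub_cancel, mul_right_comm]
  exact mul_le_mul_of_nonneg_right (by nlinarith [pow_pos hδ₀ 2]) measureReal_nonneg

theorem measure_cthickening_lenzSet_pos (hn : 4 ≤ m + 2) {δ : ℝ} (hδ : 0 < δ) :
    0 < volume (cthickening δ (lenzSet (m + 2) hn)) := by
  have h := measureReal_cthickening_lenzSet_ge hn (lt_min hδ one_pos) (min_le_right δ 1)
  have := measureReal_ball_pos (volume : Measure (EuclideanSpace ℝ (Fin m))) 0 one_pos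
  exact (ENNReal.toReal_pos_iff.1 (lt_of_lt_of_le (by positivity) h)).1.trans_le
    (measure_mono (cthickening_mono (min_le_left δ 1) _))

def circlePoint (m : ℕ) (θ : ℝ) : EuclideanSpace ℝ (Fin (m + 2)) :=
  WithLp.toLp 2 (Fin.cons (Real.cos θ / Real.sqrt 2) (Fin.cons (Real.sin θ / Real.sqrt 2) 0))

theorem continuous_circlePoint : Continuous (circlePoint m) :=
  (PiLp.continuous_toLp 2 _).comp <|
    (by fun_prop : Continuous fun θ => Real.cos θ / Real.sqrt 2).finCons <|
      (by fun_prop : Continuous fun θ => Real.sin θ / Real.sqrt 2).finCons continuous_const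

theorem tailTwo_circlePoint (θ : ℝ) : tailTwo (circlePoint m θ) = 0 := rfl

theorem norm_circlePoint (θ : ℝ) : ‖circlePoint m θ‖ = (Real.sqrt 2)⁻¹ := by
  rw [← pow_left_inj₀ (norm_nonneg _) (by positivity) two_ne_zero, norm_sq_eq_headTwo_tailTwo,
    tailTwo_circlePoint, norm_zero]
  change (Real.cos θ / Real.sqrt 2) ^ 2 + (Real.sin θ / Real.sqrt 2) ^ 2 + 0 ^ 2 = _
  rw [div_pow, div_pow, inv_pow, Real.sq_sqrt zero_le_two]
  linarith [Real.cos_sq_add_sin_sq θ]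

theorem exists_circlePoint_dist_eq_one {x : EuclideanSpace ℝ (Fin (m + 2))}
    (hx : x ∈ ball (WithLp.toLp 2 (Fin.cons 1 0)) (1 / 2)) : ∃ θ, dist x (circlePoint m θ) = 1 := by
  set p : EuclideanSpace ℝ (Fin (m + 2)) := WithLp.toLp 2 (Fin.cons 1 0)
  have hr := half_lt_inv_sqrt_two
  have hr₁ : (Real.sqrt 2)⁻¹ < 1 := inv_lt_one_of_one_lt₀ Real.one_lt_sqrt_two
  have hdist (θ : ℝ) : dist p (circlePoint m θ) ^ 2 =
      (1 - Real.cos θ / Real.sqrt 2) ^ 2 + (Real.sin θ / Real.sqrt 2) ^ 2 := by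
    rw [dist_sq_eq_headTwo_tailTwo, tailTwo_circlePoint, show tailTwo p = 0 from rfl, dist_self]
    change (1 - Real.cos θ / Real.sqrt 2) ^ 2 + (0 - Real.sin θ / Real.sqrt 2) ^ 2 + 0 ^ 2 = _
    ring
  have h₀ : dist p (circlePoint m 0) = 1 - (Real.sqrt 2)⁻¹ := by
    rw [← pow_left_inj₀ dist_nonneg (by linarith) two_ne_zero, hdist]
    simp
  have hπ : dist p (circlePoint m Real.pi) = 1 + (Real.sqrt 2)⁻¹ := by
    rw [← pow_left_inj₀ dist_nonneg (by linarith) two_ne_zero, hdist]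
    simp
    ring
  rw [mem_ball] at hx
  have hle : dist x (circlePoint m 0) ≤ 1 := by
    linarith [dist_triangle x p (circlePoint m 0)]
  have hge : 1 ≤ dist x (circlePoint m Real.pi) := by
    linarith [dist_triangle_left p (circlePoint m Real.pi) x]
  obtain ⟨θ, -, hθ⟩ := intermediate_value_Icc Real.pi_pos.le
    (continuous_const.dist continuous_circlePoint).continuousOn ⟨hle, hge⟩
  exact ⟨θ, hθ⟩

theorem div_le_nikMax_indicator_cthickening_lenzSet (hn : 4 ≤ m + 2) {δ : ℝ} (hδ : 0 ≤ δ)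
    {x : EuclideanSpace ℝ (Fin (m + 2))} (hx : x ∈ ball (WithLp.toLp 2 (Fin.cons 1 0)) (1 / 2)) :
    volume.real (cthickening δ (lenzSet (m + 2) hn)) / volume.real (unitAnnulus (m + 2) 0 δ) ≤
      nikMax (m + 2) δ ((cthickening δ (lenzSet (m + 2) hn)).indicator fun _ => (1 : ℝ)) x := by
  obtain ⟨θ, hθ⟩ := exists_circlePoint_dist_eq_one hx
  rw [div_eq_inv_mul]
  exact le_nikMax_indicator isClosed_cthickening.measurableSet
    (cthickening_subset_unitAnnulus (lenzSet_subset_sphere hn (norm_circlePoint θ)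
      (tailTwo_circlePoint θ)) hδ) hθ

/-- `min 1 (min c₁ 1 * min |B(e₀, 1/2)| 1 / K)`, where `|E^δ| ≥ c₁ δ³`, `|S^δ(0)| ≤ K δ`, and
`N^δ 1_{E^δ} ≥ |E^δ| / |S^δ(0)|` on the ball `B(e₀, 1/2)`. -/
def lenzConstant (m : ℕ) : ℝ :=
  min 1
    (min ((Real.sqrt 2)⁻¹ ^ (m - 1) / 2 * volume.real (ball (0 : EuclideanSpace ℝ (Fin m)) 1)) 1 *
      min (volume.real (ball (WithLp.toLp 2 (Fin.cons 1 0) : EuclideanSpace ℝ (Fin (m + 2)))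
        (1 / 2))) 1 /
      (2 * (m + 2 : ℕ) * 2 ^ (m + 2) * volume.real (ball (0 : EuclideanSpace ℝ (Fin (m + 2))) 1)))

theorem lenzConstant_pos (m : ℕ) : 0 < lenzConstant m := by
  have := measureReal_ball_pos (volume : Measure (EuclideanSpace ℝ (Fin m))) 0 one_pos
  have := measureReal_ball_pos (volume : Measure (EuclideanSpace ℝ (Fin (m + 2)))) 0 one_pos
  have := measureReal_ball_pos (volume : Measure (EuclideanSpace ℝ (Fin (m + 2))))
    (WithLp.toLp 2 (Fin.cons 1 0)) one_half_pos
  unfold lenzConstant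
  positivity

theorem ofReal_mul_eLpNorm_le_eLpNorm_nikMax (hn : 4 ≤ m + 2) {δ : ℝ} (hδ₀ : 0 < δ)
    (hδ₁ : δ < 1 / 2) {p : ℝ≥0∞} (hp : 1 ≤ p) :
    ENNReal.ofReal (lenzConstant m * δ ^ (2 - 3 / p.toReal)) *
        eLpNorm ((cthickening δ (lenzSet (m + 2) hn)).indicator fun _ => (1 : ℝ)) p volume ≤
      eLpNorm (nikMax (m + 2) δ ((cthickening δ (lenzSet (m + 2) hn)).indicator fun _ => (1 : ℝ)))
        p volume := by
  set Eδ := cthickening δ (lenzSet (m + 2) hn)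
  set W := ball (WithLp.toLp 2 (Fin.cons 1 0) : EuclideanSpace ℝ (Fin (m + 2))) (1 / 2)
  have hV := measureReal_cthickening_lenzSet_ge hn hδ₀ (by linarith)
  have hp₀ : p ≠ 0 := (zero_lt_one.trans_le hp).ne'
  calc ENNReal.ofReal (lenzConstant m * δ ^ (2 - 3 / p.toReal)) *
        eLpNorm (Eδ.indicator fun _ => (1 : ℝ)) p volume
      = ENNReal.ofReal (lenzConstant m * δ ^ (2 - 3 * (1 / p.toReal)) *
          volume.real Eδ ^ (1 / p.toReal)) := by
        rw [eLpNorm_indicator_const_eq_ofReal zero_le_one isClosed_cthickening.measurableSet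
          (measure_cthickening_lenzSet_pos hn hδ₀).ne'
          (volume_cthickening_lenzSet_lt_top hn δ).ne hp₀,
          one_mul, ← ENNReal.ofReal_mul (by have := lenzConstant_pos m; positivity), mul_one_div]
    _ ≤ ENNReal.ofReal (volume.real Eδ / volume.real (unitAnnulus (m + 2) 0 δ) *
          volume.real W ^ (1 / p.toReal)) :=
        ENNReal.ofReal_le_ofReal <| mul_rpow_le_div_mul_rpow
          (by have := measureReal_ball_pos (volume : Measure (EuclideanSpace ℝ (Fin m))) 0 one_pos
              positivity)
          (measureReal_ball_pos _ _ one_half_pos)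
          (measureReal_unitAnnulus_zero_pos (by omega) hδ₀ (by linarith)) hδ₀ hV
          (measureReal_unitAnnulus_zero_le hδ₀.le (by linarith)) (by positivity)
          (one_div_toReal_le_one hp) (min_le_right _ _)
    _ ≤ eLpNorm (nikMax (m + 2) δ (Eδ.indicator fun _ => (1 : ℝ))) p volume :=
        ofReal_mul_rpow_le_eLpNorm (by positivity) measurableSet_ball
          (measure_ball_pos _ _ one_half_pos).ne' measure_ball_lt_top.ne hp₀ fun x hx => by
            rw [Real.norm_of_nonneg (nikMax_nonneg _ x)]
            exact div_le_nikMax_indicator_cthickening_lenzSet hn hδ₀.le hx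

end Lenz

/-- Lenz construction. Let `n ≥ 4`, `0 < δ < 1/2`,
`E = {(0,0)} × (1/√2)S^{n−3}` and `Z = (1/√2)S¹ × {0}^{n−2}`. Then for every
`z ∈ Z`, `|E^δ ∩ S^δ(z)| ≥ c(n) |E^δ|`, and consequently
`‖N^δ‖_{L^p → L^p} ≥ c δ^{2 − 3/p}` for all `1 ≤ p ≤ ∞`. -/
theorem stmt19 (n : ℕ) (hn : 4 ≤ n) :
    ∃ c : ℝ, 0 < c ∧
      ∀ (δ : ℝ), 0 < δ → δ < 1/2 →
        (∀ z : EuclideanSpace ℝ (Fin n),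
          ‖z‖ = (Real.sqrt 2)⁻¹ → (∀ i : Fin n, 2 ≤ (i : ℕ) → z i = 0) →
          ENNReal.ofReal c * volume (Metric.cthickening δ (lenzSet n hn)) ≤
            volume (Metric.cthickening δ (lenzSet n hn) ∩ unitAnnulus n z δ)) ∧
        (∀ p : ℝ≥0∞, 1 ≤ p →
          ∃ f : EuclideanSpace ℝ (Fin n) → ℝ,
            eLpNorm f p volume ≠ 0 ∧ eLpNorm f p volume ≠ ∞ ∧
            ENNReal.ofReal (c * δ ^ (2 - 3 / p.toReal)) * eLpNorm f p volume ≤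
              eLpNorm (nikMax n δ f) p volume) := by
  obtain ⟨m, rfl⟩ : ∃ m, n = m + 2 := ⟨n - 2, by omega⟩
  refine ⟨lenzConstant m, lenzConstant_pos m,
    fun δ hδ₀ hδ₁ => ⟨fun z hz hz₂ => ?_, fun p hp => ?_⟩⟩
  · rw [inter_eq_left.2 (cthickening_subset_unitAnnulus
      (lenzSet_subset_sphere hn hz (tailTwo_eq_zero_iff.2 hz₂)) hδ₀.le)]
    exact mul_le_of_le_one_left' (ENNReal.ofReal_le_one.2 (min_le_left _ _))
  have hV := measure_cthickening_lenzSet_pos hn hδ₀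
  have hV' := volume_cthickening_lenzSet_lt_top hn δ
  have hf := eLpNorm_indicator_const_eq_ofReal zero_le_one isClosed_cthickening.measurableSet
    hV.ne' hV'.ne (zero_lt_one.trans_le hp).ne'
  refine ⟨_, ?_, ?_, ofReal_mul_eLpNorm_le_eLpNorm_nikMax hn hδ₀ hδ₁ hp⟩
  · rw [hf, one_mul]
    exact (ENNReal.ofReal_pos.2 (Real.rpow_pos_of_pos (ENNReal.toReal_pos hV.ne' hV'.ne) _)).ne'
  · rw [hf]
    exact ENNReal.ofReal_ne_top
end
end
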